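/- arXiv:2504.10137 — 7 statements merged into one kernel-verified Lean document; each statement's English description precedes it below -/
import Mathlib

section
/- Let M, N, M_t be natural numbers with M ≥ 1, N ≥ 1, M_t ≥ 1, let Δf > 0 and T > 0 be reals with T·Δf = 1, let G, G₂ be reals, let η > 0 and σ > 0 be reals, and let β be a complex number. Define the real constants a = (M_t−1)/2, b = (M_t−1)(2M_t−1)/6, m = M·N, κ = 2η/σ², ρ₁ = πΔf(M−1)MN, ρ₂ = π(T(N−1)MN + 2NG), r₂₀ = (2πΔf)²(M−1)MN(2M−1)/6, r₀₂ = (2πT)²(N−1)MN(2N−1)/6 + (2π)²N·G₂ + (2π)²T(N−1)N·G, and r₁₁ = π²(M−1)N((N−1)M + 2ΔfG). Define the real matrices F₁₁ ∈ ℝ^{4×4}, F₁₂ ∈ ℝ^{4×2}, F₂₂ ∈ ℝ^{2×2} by F₁₁ = κ|β|²·[[b·m, −a²·m, −a·ρ₁, −a·ρ₂], [−a²·m, a²·m, a·ρ₁, a·ρ₂], [−a·ρ₁, a·ρ₁, r₂₀, r₁₁], [−a·ρ₂, a·ρ₂, r₁₁, r₀₂]], F₁₂ = κ·[[a·m·Im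 β, −a·m·Re β], [−a·m·Im β, a·m·Re β], [−ρ₁·Im β, ρ₁·Re β], [−ρ₂·Im β, ρ₂·Re β]], and F₂₂ = κ·m·I₂. Then the Schur complement satisfies F₁₁ − F₁₂ F₂₂⁻¹ F₁₂ᵀ = κ|β|²·diag((b − a²)·m, 0, r₂₀ − ρ₁²/m, r₀₂ − ρ₂²/m). -/
open Matrix Real

set_option maxHeartbeats 2000000 in
/-- The algebraic core of Proposition 1: the Schur complement of the 6×6 Fisher
information matrix (with the channel-gain block eliminated) equals the stated
diagonal matrix. -/
theorem stmt0 (M N Mt : ℕ) (hM : 1 ≤ M) (hN : 1 ≤ N) (hMt : 1 ≤ Mt)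
    (Δf T : ℝ) (hΔf : 0 < Δf) (hT : 0 < T) (hTΔf : T * Δf = 1)
    (G G₂ : ℝ) (η σ : ℝ) (hη : 0 < η) (hσ : 0 < σ) (β : ℂ)
    (a b m κ ρ₁ ρ₂ r₂₀ r₀₂ r₁₁ : ℝ)
    (ha : a = ((Mt : ℝ) - 1) / 2)
    (hb : b = ((Mt : ℝ) - 1) * (2 * (Mt : ℝ) - 1) / 6)
    (hm : m = (M : ℝ) * (N : ℝ))
    (hκ : κ = 2 * η / σ ^ 2)
    (hρ₁ : ρ₁ = Real.pi * Δf * ((M : ℝ) - 1) * (M : ℝ) * (N : ℝ))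
    (hρ₂ : ρ₂ = Real.pi * (T * ((N : ℝ) - 1) * (M : ℝ) * (N : ℝ) + 2 * (N : ℝ) * G))
    (hr₂₀ : r₂₀ = (2 * Real.pi * Δf) ^ 2 * ((M : ℝ) - 1) * (M : ℝ) * (N : ℝ)
        * (2 * (M : ℝ) - 1) / 6)
    (hr₀₂ : r₀₂ = (2 * Real.pi * T) ^ 2 * ((N : ℝ) - 1) * (M : ℝ) * (N : ℝ)
        * (2 * (N : ℝ) - 1) / 6
        + (2 * Real.pi) ^ 2 * (N : ℝ) * G₂
        + (2 * Real.pi) ^ 2 * T * ((N : ℝ) - 1) * (N : ℝ) * G)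
    (hr₁₁ : r₁₁ = Real.pi ^ 2 * ((M : ℝ) - 1) * (N : ℝ)
        * (((N : ℝ) - 1) * (M : ℝ) + 2 * Δf * G))
    (F₁₁ : Matrix (Fin 4) (Fin 4) ℝ) (F₁₂ : Matrix (Fin 4) (Fin 2) ℝ)
    (F₂₂ : Matrix (Fin 2) (Fin 2) ℝ)
    (hF₁₁ : F₁₁ = (κ * ‖β‖ ^ 2) •
      !![b * m, -(a ^ 2 * m), -(a * ρ₁), -(a * ρ₂);
         -(a ^ 2 * m), a ^ 2 * m, a * ρ₁, a * ρ₂;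
         -(a * ρ₁), a * ρ₁, r₂₀, r₁₁;
         -(a * ρ₂), a * ρ₂, r₁₁, r₀₂])
    (hF₁₂ : F₁₂ = κ •
      !![a * m * β.im, -(a * m * β.re);
         -(a * m * β.im), a * m * β.re;
         -(ρ₁ * β.im), ρ₁ * β.re;
         -(ρ₂ * β.im), ρ₂ * β.re])
    (hF₂₂ : F₂₂ = (κ * m) • (1 : Matrix (Fin 2) (Fin 2) ℝ)) :
    F₁₁ - F₁₂ * F₂₂⁻¹ * F₁₂ᵀ = (κ * ‖β‖ ^ 2) •
      Matrix.diagonal ![(b - a ^ 2) * m, 0, r₂₀ - ρ₁ ^ 2 / m, r₀₂ - ρ₂ ^ 2 / m] := by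
  have hM1 : (1:ℝ) ≤ (M:ℝ) := by exact_mod_cast hM
  have hN1 : (1:ℝ) ≤ (N:ℝ) := by exact_mod_cast hN
  have hm0 : (0:ℝ) < m := by rw [hm]; nlinarith
  have hκ0 : (0:ℝ) < κ := by rw [hκ]; positivity
  have hκm : κ * m ≠ 0 := by positivity
  have hinv : F₂₂⁻¹ = (κ * m)⁻¹ • (1 : Matrix (Fin 2) (Fin 2) ℝ) := by
    apply Matrix.inv_eq_right_inv
    rw [hF₂₂, Matrix.smul_mul, Matrix.mul_smul, Matrix.one_mul, smul_smul,
      mul_inv_cancel₀ hκm, one_smul]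
  have habs : ‖β‖ ^ 2 = β.re ^ 2 + β.im ^ 2 := by
    rw [Complex.sq_norm, Complex.normSq_apply]; ring
  have hkey : r₁₁ * m = ρ₁ * ρ₂ := by
    rw [hr₁₁, hm, hρ₁, hρ₂]
    linear_combination (-(Real.pi ^ 2 * ((M:ℝ) - 1) * ((N:ℝ) - 1) * (M:ℝ) ^ 2 * (N:ℝ) ^ 2)) * hTΔf
  subst hF₁₁ hF₁₂
  rw [hinv]
  ext i j
  fin_cases i <;> fin_cases j <;>
    simp [Matrix.mul_apply, Matrix.diagonal, Fin.sum_univ_succ, habs, Matrix.vecHead, Matrix.vecTail, Matrix.vecMul, dotProduct] <;>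
    (try field_simp) <;>
    try first
      | ring
      | linear_combination (κ * (β.re ^ 2 + β.im ^ 2)) * hkey
      | linear_combination (-(κ * (β.re ^ 2 + β.im ^ 2))) * hkey
      | linear_combination (κ ^ 2 * (β.re ^ 2 + β.im ^ 2)) * hkey
      | linear_combination (-(κ ^ 2 * (β.re ^ 2 + β.im ^ 2))) * hkey
  all_goals linear_combination (κ * (β.re ^ 2 + β.im ^ 2)) * hkey
end

section
/- Let M ≥ 1 and N ≥ 1 be natural numbers and x, y real numbers. Then (1/(M²N²)) · ( Σ_{k=0}^{N−1} Σ_{k'=0}^{N−1} Σ_{n'=0}^{N−1} Σ_{n''=0}^{N−1} exp(2πi(k'−k+y)(n''−n')/N) ) · ( Σ_{l=0}^{M−1} Σ_{l'=0}^{M−1} Σ_{m'=0}^{M−1} Σ_{m''=0}^{M−1} exp(2πi(l'−l+x)(m''−m')/M) ) = M·N. -/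
open Finset Complex

lemma sum4_swap {α : Type*} [AddCommMonoid α] (s : Finset ℕ) (g : ℕ → ℕ → ℕ → ℕ → α) :
    ∑ a ∈ s, ∑ b ∈ s, ∑ c ∈ s, ∑ d ∈ s, g a b c d
      = ∑ c ∈ s, ∑ d ∈ s, ∑ a ∈ s, ∑ b ∈ s, g a b c d :=
  calc ∑ a ∈ s, ∑ b ∈ s, ∑ c ∈ s, ∑ d ∈ s, g a b c d
      = ∑ a ∈ s, ∑ c ∈ s, ∑ b ∈ s, ∑ d ∈ s, g a b c d :=
        Finset.sum_congr rfl fun a _ => Finset.sum_comm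
    _ = ∑ c ∈ s, ∑ a ∈ s, ∑ b ∈ s, ∑ d ∈ s, g a b c d := Finset.sum_comm
    _ = ∑ c ∈ s, ∑ a ∈ s, ∑ d ∈ s, ∑ b ∈ s, g a b c d :=
        Finset.sum_congr rfl fun c _ => Finset.sum_congr rfl fun a _ => Finset.sum_comm
    _ = ∑ c ∈ s, ∑ d ∈ s, ∑ a ∈ s, ∑ b ∈ s, g a b c d :=
        Finset.sum_congr rfl fun c _ => Finset.sum_comm

lemma geom (N : ℕ) (hN : 0 < N) (d : ℤ) :
    ∑ k ∈ Finset.range N, Complex.exp (2 * (Real.pi : ℂ) * Complex.I * k * d / N)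
      = if (N : ℤ) ∣ d then (N : ℂ) else 0 := by
  have hNC : (N : ℂ) ≠ 0 := Nat.cast_ne_zero.mpr hN.ne'
  set ζ := Complex.exp (2 * (Real.pi : ℂ) * Complex.I * d / N) with hζdef
  have hζk : ∀ k : ℕ, Complex.exp (2 * (Real.pi : ℂ) * Complex.I * k * d / N) = ζ ^ k := by
    intro k
    rw [hζdef, ← Complex.exp_nat_mul]
    ring_nf
  simp_rw [hζk]
  by_cases hd : (N : ℤ) ∣ d
  · obtain ⟨c, rfl⟩ := hd
    have h1 : ζ = 1 := by
      rw [hζdef]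
      have : 2 * (Real.pi : ℂ) * Complex.I * ((((N : ℤ) * c : ℤ) : ℂ)) / N
          = (c : ℂ) * (2 * (Real.pi : ℂ) * Complex.I) := by
        push_cast
        field_simp
      rw [this, Complex.exp_int_mul_two_pi_mul_I]
    rw [if_pos (Dvd.intro c rfl)]
    simp [h1]
  · have hζN : ζ ^ N = 1 := by
      rw [hζdef, ← Complex.exp_nat_mul]
      have : (N : ℂ) * (2 * (Real.pi : ℂ) * Complex.I * d / N)
          = (d : ℂ) * (2 * (Real.pi : ℂ) * Complex.I) := by
        field_simp
      rw [this, Complex.exp_int_mul_two_pi_mul_I]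
    have hζ1 : ζ ≠ 1 := by
      intro h
      apply hd
      rw [hζdef, Complex.exp_eq_one_iff] at h
      obtain ⟨n, hn⟩ := h
      have h2 : (d : ℂ) = (n : ℂ) * N := by
        have hpi : (2 * (Real.pi : ℂ) * Complex.I) ≠ 0 := by
          simp [Complex.ext_iff, Real.pi_ne_zero, Complex.I_ne_zero]
        field_simp at hn
        apply mul_left_cancel₀ hpi
        linear_combination (2 * (Real.pi : ℂ) * Complex.I) * hn
      have h3 : (d : ℤ) = n * N := by
        exact_mod_cast h2
      exact ⟨n, by linarith⟩
    rw [geom_sum_eq hζ1, hζN]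
    simp [hd]

lemma quad_sum (N : ℕ) (hN : 1 ≤ N) (y : ℝ) :
    ∑ k ∈ Finset.range N, ∑ k' ∈ Finset.range N,
        ∑ n' ∈ Finset.range N, ∑ n'' ∈ Finset.range N,
          Complex.exp (2 * (Real.pi : ℂ) * Complex.I
            * ((k' : ℂ) - (k : ℂ) + (y : ℂ)) * ((n'' : ℂ) - (n' : ℂ)) / (N : ℂ))
      = (N : ℂ) ^ 3 := by
  have hN0 : 0 < N := hN
  rw [sum4_swap]
  have key : ∀ n' ∈ Finset.range N, ∀ n'' ∈ Finset.range N,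
      (∑ k ∈ Finset.range N, ∑ k' ∈ Finset.range N,
        Complex.exp (2 * (Real.pi : ℂ) * Complex.I
          * ((k' : ℂ) - (k : ℂ) + (y : ℂ)) * ((n'' : ℂ) - (n' : ℂ)) / (N : ℂ)))
      = if n'' = n' then (N : ℂ) ^ 2 else 0 := by
    intro n' hn' n'' hn''
    have split : ∀ k k' : ℕ,
        Complex.exp (2 * (Real.pi : ℂ) * Complex.I
          * ((k' : ℂ) - (k : ℂ) + (y : ℂ)) * ((n'' : ℂ) - (n' : ℂ)) / (N : ℂ))
        = Complex.exp (2 * (Real.pi : ℂ) * Complex.I * (y : ℂ) * ((n'' : ℂ) - (n' : ℂ)) / N)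
          * (Complex.exp (2 * (Real.pi : ℂ) * Complex.I * (k : ℂ) * (((n' : ℤ) - (n'' : ℤ) : ℤ) : ℂ) / N)
            * Complex.exp (2 * (Real.pi : ℂ) * Complex.I * (k' : ℂ) * (((n'' : ℤ) - (n' : ℤ) : ℤ) : ℂ) / N)) := by
      intro k k'
      rw [← Complex.exp_add, ← Complex.exp_add]
      congr 1
      push_cast
      have hNC : (N : ℂ) ≠ 0 := Nat.cast_ne_zero.mpr hN0.ne'
      field_simp
      ring
    simp_rw [split, ← Finset.mul_sum, ← Finset.sum_mul, geom N hN0]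
    by_cases h : n'' = n'
    · subst h
      simp
      ring
    · have h1 : ¬ (N : ℤ) ∣ ((n'' : ℤ) - (n' : ℤ)) := by
        intro hdvd
        apply h
        have hb : ((n'' : ℤ) - (n' : ℤ)) = 0 := by
          rcases hdvd with ⟨c, hc⟩
          have hlt1 : (n'' : ℤ) < N := by exact_mod_cast Finset.mem_range.mp hn''
          have hlt2 : (n' : ℤ) < N := by exact_mod_cast Finset.mem_range.mp hn'
          have hge1 : (0 : ℤ) ≤ (n'' : ℤ) := Int.ofNat_nonneg _
          have hge2 : (0 : ℤ) ≤ (n' : ℤ) := Int.ofNat_nonneg _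
          have : c = 0 := by nlinarith
          simp [this] at hc
          exact hc
        have : (n'' : ℤ) = (n' : ℤ) := by linarith
        exact_mod_cast this
      simp [h1, h]
  rw [Finset.sum_congr rfl (fun n' hn' => Finset.sum_congr rfl (fun n'' hn'' => key n' hn' n'' hn''))]
  simp only [Finset.sum_ite_eq', Finset.mem_range]
  rw [Finset.sum_congr rfl (fun n hn => if_pos (Finset.mem_range.mp hn)),
    Finset.sum_const, Finset.card_range, nsmul_eq_mul]
  ring

/-- Appendix B, equation (25a): the normalized self-correlation of the OTFS
delay-Doppler coupling matrix equals `M * N`. -/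
theorem stmt3 (M N : ℕ) (hM : 1 ≤ M) (hN : 1 ≤ N) (x y : ℝ) :
    (1 / ((M : ℂ) ^ 2 * (N : ℂ) ^ 2)) *
      (∑ k ∈ Finset.range N, ∑ k' ∈ Finset.range N,
        ∑ n' ∈ Finset.range N, ∑ n'' ∈ Finset.range N,
          Complex.exp (2 * (Real.pi : ℂ) * Complex.I
            * ((k' : ℂ) - (k : ℂ) + (y : ℂ)) * ((n'' : ℂ) - (n' : ℂ)) / (N : ℂ))) *
      (∑ l ∈ Finset.range M, ∑ l' ∈ Finset.range M,
        ∑ m' ∈ Finset.range M, ∑ m'' ∈ Finset.range M,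
          Complex.exp (2 * (Real.pi : ℂ) * Complex.I
            * ((l' : ℂ) - (l : ℂ) + (x : ℂ)) * ((m'' : ℂ) - (m' : ℂ)) / (M : ℂ)))
    = (M : ℂ) * (N : ℂ) := by
  rw [quad_sum N hN y, quad_sum M hM x]
  have hMC : (M : ℂ) ≠ 0 := Nat.cast_ne_zero.mpr (Nat.one_le_iff_ne_zero.mp hM)
  have hNC : (N : ℂ) ≠ 0 := Nat.cast_ne_zero.mpr (Nat.one_le_iff_ne_zero.mp hN)
  field_simp
end

section
/- Let M ≥ 1 and N ≥ 1 be natural numbers, Δf > 0 a real number, and x, y real numbers. Then (2πiΔf/(M²N²)) · ( Σ_{k=0}^{N−1} Σ_{k'=0}^{N−1} Σ_{n'=0}^{N−1} Σ_{n''=0}^{N−1} exp(2πi(k'−k+y)(n''−n')/N) ) · ( Σ_{l=0}^{M−1} Σ_{l'=0}^{M−1} Σ_{m'=0}^{M−1} Σ_{m''=0}^{M−1} m''·exp(2πi(l'−l+x)(m''−m')/M) ) = iπΔf(M−1)MN. -/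
open Finset Complex

lemma gsum (N : ℕ) (d : ℤ) (hd : ¬ (N:ℤ) ∣ d) :
    ∑ k ∈ Finset.range N, Complex.exp (2 * (Real.pi:ℂ) * Complex.I * (k:ℂ) * (d:ℂ) / (N:ℂ)) = 0 := by
  rcases Nat.eq_zero_or_pos N with rfl | hN
  · simp
  have hN0 : (N:ℂ) ≠ 0 := Nat.cast_ne_zero.2 hN.ne'
  set ζ : ℂ := Complex.exp (2 * (Real.pi:ℂ) * Complex.I * (d:ℂ) / (N:ℂ)) with hζ
  have hterm : ∀ k : ℕ, Complex.exp (2 * (Real.pi:ℂ) * Complex.I * (k:ℂ) * (d:ℂ) / (N:ℂ)) = ζ ^ k := by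
    intro k
    rw [hζ, ← Complex.exp_nat_mul]
    ring_nf
  have hζN : ζ ^ N = 1 := by
    rw [hζ, ← Complex.exp_nat_mul]
    have : (N:ℂ) * (2 * (Real.pi:ℂ) * Complex.I * (d:ℂ) / (N:ℂ)) = (d:ℂ) * (2 * (Real.pi:ℂ) * Complex.I) := by
      field_simp
    rw [this, Complex.exp_int_mul_two_pi_mul_I]
  have hζ1 : ζ ≠ 1 := by
    intro h
    rw [hζ, Complex.exp_eq_one_iff] at h
    obtain ⟨n, hn⟩ := h
    apply hd
    refine ⟨n, ?_⟩
    have h2 : (2:ℂ) * Real.pi * Complex.I ≠ 0 :=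
      mul_ne_zero (mul_ne_zero two_ne_zero (Complex.ofReal_ne_zero.2 Real.pi_ne_zero))
        Complex.I_ne_zero
    have : (d:ℂ) = (N:ℂ) * (n:ℂ) := by
      rw [div_eq_iff hN0] at hn
      have h3 : (2:ℂ) * Real.pi * Complex.I * (d:ℂ) = (2:ℂ) * Real.pi * Complex.I * ((N:ℂ) * (n:ℂ)) := by
        linear_combination hn
      exact mul_left_cancel₀ h2 h3
    exact_mod_cast this
  calc ∑ k ∈ Finset.range N, Complex.exp (2 * (Real.pi:ℂ) * Complex.I * (k:ℂ) * (d:ℂ) / (N:ℂ))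
      = ∑ k ∈ Finset.range N, ζ ^ k := by simp_rw [hterm]
    _ = (ζ ^ N - 1) / (ζ - 1) := geom_sum_eq hζ1 N
    _ = 0 := by rw [hζN]; simp

lemma key2 (N : ℕ) (c : ℝ) (n' n'' : ℕ) (hn' : n' < N) (hn'' : n'' < N) :
    ∑ k' ∈ Finset.range N,
      Complex.exp (2 * (Real.pi:ℂ) * Complex.I * ((k':ℂ) + (c:ℂ)) * ((n'':ℂ) - (n':ℂ)) / (N:ℂ))
      = if n'' = n' then (N:ℂ) else 0 := by
  by_cases h : n'' = n'
  · subst h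
    simp
  · rw [if_neg h]
    have hd : ¬ (N:ℤ) ∣ ((n'':ℤ) - (n':ℤ)) := by
      intro hdvd
      have habs : |(n'':ℤ) - (n':ℤ)| < (N:ℤ) := by rw [abs_lt]; omega
      have h0 := Int.eq_zero_of_abs_lt_dvd hdvd habs
      omega
    have : ∀ k' : ℕ,
        Complex.exp (2 * (Real.pi:ℂ) * Complex.I * ((k':ℂ) + (c:ℂ)) * ((n'':ℂ) - (n':ℂ)) / (N:ℂ))
        = Complex.exp (2 * (Real.pi:ℂ) * Complex.I * (k':ℂ) * (((n'':ℤ) - (n':ℤ) : ℤ):ℂ) / (N:ℂ))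
          * Complex.exp (2 * (Real.pi:ℂ) * Complex.I * (c:ℂ) * ((n'':ℂ) - (n':ℂ)) / (N:ℂ)) := by
      intro k'
      rw [← Complex.exp_add]
      push_cast
      ring_nf
    simp_rw [this, ← Finset.sum_mul, gsum N _ hd, zero_mul]

/-- Appendix B, equation (25b): `R^{(1,0)} = i π Δf (M-1) M N`. -/
theorem stmt4 (M N : ℕ) (hM : 1 ≤ M) (hN : 1 ≤ N) (Δf : ℝ) (hΔf : 0 < Δf)
    (x y : ℝ) :
    (2 * (Real.pi : ℂ) * Complex.I * (Δf : ℂ) / ((M : ℂ) ^ 2 * (N : ℂ) ^ 2)) *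
      (∑ k ∈ Finset.range N, ∑ k' ∈ Finset.range N,
        ∑ n' ∈ Finset.range N, ∑ n'' ∈ Finset.range N,
          Complex.exp (2 * (Real.pi : ℂ) * Complex.I
            * ((k' : ℂ) - (k : ℂ) + (y : ℂ)) * ((n'' : ℂ) - (n' : ℂ)) / (N : ℂ))) *
      (∑ l ∈ Finset.range M, ∑ l' ∈ Finset.range M,
        ∑ m' ∈ Finset.range M, ∑ m'' ∈ Finset.range M,
          (m'' : ℂ) * Complex.exp (2 * (Real.pi : ℂ) * Complex.I
            * ((l' : ℂ) - (l : ℂ) + (x : ℂ)) * ((m'' : ℂ) - (m' : ℂ)) / (M : ℂ)))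
    = Complex.I * (Real.pi : ℂ) * (Δf : ℂ) * ((M : ℂ) - 1) * (M : ℂ) * (N : ℂ) := by
  have hM0 : (M:ℂ) ≠ 0 := Nat.cast_ne_zero.2 (by omega)
  have hN0 : (N:ℂ) ≠ 0 := Nat.cast_ne_zero.2 (by omega)
  -- inner k'-sum collapse, parametrized
  have inner : ∀ (P : ℕ) (t : ℝ) (a n' n'' : ℕ), n' < P → n'' < P →
      ∑ b ∈ Finset.range P,
        Complex.exp (2 * (Real.pi:ℂ) * Complex.I * ((b:ℂ) - (a:ℂ) + (t:ℂ))
          * ((n'':ℂ) - (n':ℂ)) / (P:ℂ))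
      = if n'' = n' then (P:ℂ) else 0 := by
    intro P t a n' n'' hn' hn''
    have := key2 P (t - a) n' n'' hn' hn''
    rw [← this]
    refine Finset.sum_congr rfl fun b _ => ?_
    push_cast
    ring_nf
  -- Doppler sum
  have hD : (∑ k ∈ Finset.range N, ∑ k' ∈ Finset.range N,
        ∑ n' ∈ Finset.range N, ∑ n'' ∈ Finset.range N,
          Complex.exp (2 * (Real.pi : ℂ) * Complex.I
            * ((k' : ℂ) - (k : ℂ) + (y : ℂ)) * ((n'' : ℂ) - (n' : ℂ)) / (N : ℂ)))
      = (N:ℂ)^3 := by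
    have h1 : ∀ k ∈ Finset.range N,
        (∑ k' ∈ Finset.range N, ∑ n' ∈ Finset.range N, ∑ n'' ∈ Finset.range N,
          Complex.exp (2 * (Real.pi : ℂ) * Complex.I
            * ((k' : ℂ) - (k : ℂ) + (y : ℂ)) * ((n'' : ℂ) - (n' : ℂ)) / (N : ℂ)))
        = (N:ℂ)^2 := by
      intro k _
      rw [Finset.sum_comm]
      have h2 : ∀ n' ∈ Finset.range N,
          (∑ k' ∈ Finset.range N, ∑ n'' ∈ Finset.range N,
            Complex.exp (2 * (Real.pi : ℂ) * Complex.I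
              * ((k' : ℂ) - (k : ℂ) + (y : ℂ)) * ((n'' : ℂ) - (n' : ℂ)) / (N : ℂ)))
          = (N:ℂ) := by
        intro n' hn'
        rw [Finset.sum_comm]
        rw [Finset.sum_congr rfl fun n'' hn'' =>
          inner N y k n' n'' (Finset.mem_range.1 hn') (Finset.mem_range.1 hn'')]
        rw [Finset.sum_ite_eq' (Finset.range N) n' (fun _ => (N:ℂ))]
        simp [Finset.mem_range.2 (Finset.mem_range.1 hn')]
      rw [Finset.sum_congr rfl h2, Finset.sum_const, Finset.card_range]
      push_cast; ring
    rw [Finset.sum_congr rfl h1, Finset.sum_const, Finset.card_range]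
    push_cast; ring
  -- Delay sum
  have hT : (∑ l ∈ Finset.range M, ∑ l' ∈ Finset.range M,
        ∑ m' ∈ Finset.range M, ∑ m'' ∈ Finset.range M,
          (m'' : ℂ) * Complex.exp (2 * (Real.pi : ℂ) * Complex.I
            * ((l' : ℂ) - (l : ℂ) + (x : ℂ)) * ((m'' : ℂ) - (m' : ℂ)) / (M : ℂ)))
      = (M:ℂ)^2 * (∑ m' ∈ Finset.range M, (m':ℂ)) := by
    have h1 : ∀ l ∈ Finset.range M,
        (∑ l' ∈ Finset.range M, ∑ m' ∈ Finset.range M, ∑ m'' ∈ Finset.range M,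
          (m'' : ℂ) * Complex.exp (2 * (Real.pi : ℂ) * Complex.I
            * ((l' : ℂ) - (l : ℂ) + (x : ℂ)) * ((m'' : ℂ) - (m' : ℂ)) / (M : ℂ)))
        = (M:ℂ) * (∑ m' ∈ Finset.range M, (m':ℂ)) := by
      intro l _
      rw [Finset.sum_comm]
      have h2 : ∀ m' ∈ Finset.range M,
          (∑ l' ∈ Finset.range M, ∑ m'' ∈ Finset.range M,
            (m'' : ℂ) * Complex.exp (2 * (Real.pi : ℂ) * Complex.I
              * ((l' : ℂ) - (l : ℂ) + (x : ℂ)) * ((m'' : ℂ) - (m' : ℂ)) / (M : ℂ)))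
          = (m':ℂ) * (M:ℂ) := by
        intro m' hm'
        rw [Finset.sum_comm]
        have h3 : ∀ m'' ∈ Finset.range M,
            (∑ l' ∈ Finset.range M,
              (m'' : ℂ) * Complex.exp (2 * (Real.pi : ℂ) * Complex.I
                * ((l' : ℂ) - (l : ℂ) + (x : ℂ)) * ((m'' : ℂ) - (m' : ℂ)) / (M : ℂ)))
            = if m'' = m' then (m'':ℂ) * (M:ℂ) else 0 := by
          intro m'' hm''
          rw [← Finset.mul_sum,
            inner M x l m' m'' (Finset.mem_range.1 hm') (Finset.mem_range.1 hm'')]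
          by_cases h : m'' = m' <;> simp [h]
        rw [Finset.sum_congr rfl h3,
          Finset.sum_ite_eq' (Finset.range M) m' (fun m'' => (m'':ℂ) * (M:ℂ))]
        simp [Finset.mem_range.2 (Finset.mem_range.1 hm')]
      rw [Finset.sum_congr rfl h2, ← Finset.sum_mul]
      ring
    rw [Finset.sum_congr rfl h1, Finset.sum_const, Finset.card_range]
    push_cast; ring
  rw [hD, hT]
  have gauss : (∑ m' ∈ Finset.range M, (m':ℂ)) * 2 = (M:ℂ) * ((M:ℂ) - 1) := by
    have h := congrArg (Nat.cast : ℕ → ℂ) (Finset.sum_range_id_mul_two M)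
    push_cast [Nat.cast_sub hM] at h
    convert h using 2 <;> push_cast <;> ring
  field_simp
  linear_combination (Δf:ℂ) * gauss
end

section
/- Let M ≥ 1 and N ≥ 1 be natural numbers, T > 0 a real number, g : {0,…,M−1} → ℝ an arbitrary function, and x, y real numbers. Then (2πi/(M²N²)) · Σ_{k,k',n',n''=0}^{N−1} Σ_{l,l',m',m''=0}^{M−1} (T·n'' + g(l')) · exp(2πi(k'−k+y)(n''−n')/N) · exp(2πi(l'−l+x)(m''−m')/M) = iπ·( T(N−1)MN + 2N·Σ_{l=0}^{M−1} g(l) ). -/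
open Finset Complex


lemma geo_zero (N a b : ℕ) (ha : a < N) (hb : b < N) (hab : a ≠ b) :
    ∑ k ∈ Finset.range N, Complex.exp (2 * (Real.pi:ℂ) * Complex.I * (k:ℂ) * ((a:ℂ) - (b:ℂ)) / (N:ℂ)) = 0 := by
  have hN : 0 < N := lt_of_le_of_lt (Nat.zero_le a) ha
  have hNne : (N:ℂ) ≠ 0 := Nat.cast_ne_zero.mpr hN.ne'
  set c : ℂ := Complex.exp (2 * (Real.pi:ℂ) * Complex.I * ((a:ℂ) - (b:ℂ)) / (N:ℂ)) with hc
  have hterm : ∀ k : ℕ, Complex.exp (2 * (Real.pi:ℂ) * Complex.I * (k:ℂ) * ((a:ℂ) - (b:ℂ)) / (N:ℂ)) = c ^ k := by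
    intro k
    rw [hc, ← Complex.exp_nat_mul]
    congr 1
    ring
  have hcN : c ^ N = 1 := by
    rw [hc, ← Complex.exp_nat_mul]
    obtain ⟨d, hd⟩ : ∃ d : ℤ, ((d:ℂ)) = (a:ℂ) - (b:ℂ) := ⟨(a:ℤ) - b, by push_cast; ring⟩
    have h1 : (N:ℂ) * (2 * (Real.pi:ℂ) * Complex.I * ((a:ℂ) - (b:ℂ)) / (N:ℂ)) = (d:ℂ) * (2 * (Real.pi:ℂ) * Complex.I) := by
      rw [hd]; field_simp
    rw [h1, Complex.exp_int_mul_two_pi_mul_I]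
  have hc1 : c ≠ 1 := by
    intro h
    rw [hc, Complex.exp_eq_one_iff] at h
    obtain ⟨n, hn⟩ := h
    have hπ : (2 * (Real.pi:ℂ) * Complex.I) ≠ 0 := by
      simp [Real.pi_ne_zero, Complex.I_ne_zero]
    have h2 : ((a:ℂ) - (b:ℂ)) = (n:ℂ) * (N:ℂ) := by
      field_simp at hn
      apply mul_right_cancel₀ hπ
      rw [mul_comm] at hn
      linear_combination (2 * (Real.pi:ℂ) * Complex.I) * hn
    have h3 : (a:ℤ) - (b:ℤ) = n * N := by exact_mod_cast h2
    rcases lt_trichotomy n 0 with h4 | h4 | h4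
    · have : n ≤ -1 := by omega
      nlinarith [h3, ha, hb]
    · subst h4; simp at h3; omega
    · have : 1 ≤ n := by omega
      nlinarith [h3, ha, hb]
  calc ∑ k ∈ Finset.range N, Complex.exp (2 * (Real.pi:ℂ) * Complex.I * (k:ℂ) * ((a:ℂ) - (b:ℂ)) / (N:ℂ))
      = ∑ k ∈ Finset.range N, c ^ k := by simp_rw [hterm]
    _ = (c ^ N - 1) / (c - 1) := geom_sum_eq hc1 N
    _ = 0 := by rw [hcN]; simp

lemma innerSum5 (N : ℕ) (u : ℝ) (c : ℕ) (a b : ℕ) (ha : a < N) (hb : b < N) :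
    ∑ k ∈ Finset.range N, Complex.exp (2 * (Real.pi:ℂ) * Complex.I * ((c:ℂ) - (k:ℂ) + (u:ℂ)) * ((b:ℂ) - (a:ℂ)) / (N:ℂ)) = if a = b then (N:ℂ) else 0 := by
  by_cases hab : a = b
  · subst hab
    simp
  · rw [if_neg hab]
    have key : ∀ k : ℕ, Complex.exp (2 * (Real.pi:ℂ) * Complex.I * ((c:ℂ) - (k:ℂ) + (u:ℂ)) * ((b:ℂ) - (a:ℂ)) / (N:ℂ))
        = Complex.exp (2 * (Real.pi:ℂ) * Complex.I * ((c:ℂ) + (u:ℂ)) * ((b:ℂ) - (a:ℂ)) / (N:ℂ))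
          * Complex.exp (2 * (Real.pi:ℂ) * Complex.I * (k:ℂ) * ((a:ℂ) - (b:ℂ)) / (N:ℂ)) := by
      intro k
      rw [← Complex.exp_add]
      congr 1
      ring
    simp_rw [key, ← Finset.mul_sum, geo_zero N a b ha hb hab, mul_zero]

lemma blockB (M : ℕ) (x : ℝ) (c : ℕ → ℂ) :
    ∑ l ∈ Finset.range M, ∑ l' ∈ Finset.range M, ∑ m' ∈ Finset.range M, ∑ m'' ∈ Finset.range M,
      c l' * Complex.exp (2 * (Real.pi:ℂ) * Complex.I * ((l':ℂ) - (l:ℂ) + (x:ℂ)) * ((m'':ℂ) - (m':ℂ)) / (M:ℂ))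
    = (M:ℂ)^2 * ∑ l' ∈ Finset.range M, c l' := by
  rw [Finset.sum_comm]
  rw [Finset.mul_sum]
  refine Finset.sum_congr rfl fun l' hl' => ?_
  calc ∑ l ∈ Finset.range M, ∑ m' ∈ Finset.range M, ∑ m'' ∈ Finset.range M,
        c l' * Complex.exp (2 * (Real.pi:ℂ) * Complex.I * ((l':ℂ) - (l:ℂ) + (x:ℂ)) * ((m'':ℂ) - (m':ℂ)) / (M:ℂ))
      = ∑ m' ∈ Finset.range M, ∑ m'' ∈ Finset.range M, c l' * ∑ l ∈ Finset.range M,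
          Complex.exp (2 * (Real.pi:ℂ) * Complex.I * ((l':ℂ) - (l:ℂ) + (x:ℂ)) * ((m'':ℂ) - (m':ℂ)) / (M:ℂ)) := by
        rw [Finset.sum_comm]
        refine Finset.sum_congr rfl fun m' _ => ?_
        rw [Finset.sum_comm]
        refine Finset.sum_congr rfl fun m'' _ => ?_
        rw [Finset.mul_sum]
    _ = ∑ m' ∈ Finset.range M, ∑ m'' ∈ Finset.range M, c l' * (if m' = m'' then (M:ℂ) else 0) := by
        refine Finset.sum_congr rfl fun m' hm' => Finset.sum_congr rfl fun m'' hm'' => ?_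
        rw [innerSum5 M x l' m' m'' (Finset.mem_range.mp hm') (Finset.mem_range.mp hm'')]
    _ = (M:ℂ)^2 * c l' := by
        simp_rw [mul_ite, mul_zero, Finset.sum_ite_eq, Finset.mem_range]
        rw [Finset.sum_ite_of_true (fun m' hm' => Finset.mem_range.mp hm'), Finset.sum_const, Finset.card_range]
        simp [nsmul_eq_mul]
        ring

lemma blockA (N : ℕ) (y : ℝ) (c : ℕ → ℂ) :
    ∑ k ∈ Finset.range N, ∑ k' ∈ Finset.range N, ∑ n' ∈ Finset.range N, ∑ n'' ∈ Finset.range N,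
      c n'' * Complex.exp (2 * (Real.pi:ℂ) * Complex.I * ((k':ℂ) - (k:ℂ) + (y:ℂ)) * ((n'':ℂ) - (n':ℂ)) / (N:ℂ))
    = (N:ℂ)^2 * ∑ n'' ∈ Finset.range N, c n'' := by
  calc ∑ k ∈ Finset.range N, ∑ k' ∈ Finset.range N, ∑ n' ∈ Finset.range N, ∑ n'' ∈ Finset.range N,
        c n'' * Complex.exp (2 * (Real.pi:ℂ) * Complex.I * ((k':ℂ) - (k:ℂ) + (y:ℂ)) * ((n'':ℂ) - (n':ℂ)) / (N:ℂ))
      = ∑ k' ∈ Finset.range N, ∑ n' ∈ Finset.range N, ∑ n'' ∈ Finset.range N, c n'' * ∑ k ∈ Finset.range N,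
          Complex.exp (2 * (Real.pi:ℂ) * Complex.I * ((k':ℂ) - (k:ℂ) + (y:ℂ)) * ((n'':ℂ) - (n':ℂ)) / (N:ℂ)) := by
        rw [Finset.sum_comm]
        refine Finset.sum_congr rfl fun k' _ => ?_
        rw [Finset.sum_comm]
        refine Finset.sum_congr rfl fun n' _ => ?_
        rw [Finset.sum_comm]
        refine Finset.sum_congr rfl fun n'' _ => ?_
        rw [Finset.mul_sum]
    _ = ∑ k' ∈ Finset.range N, ∑ n' ∈ Finset.range N, ∑ n'' ∈ Finset.range N, c n'' * (if n' = n'' then (N:ℂ) else 0) := by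
        refine Finset.sum_congr rfl fun k' _ => Finset.sum_congr rfl fun n' hn' => Finset.sum_congr rfl fun n'' hn'' => ?_
        rw [innerSum5 N y k' n' n'' (Finset.mem_range.mp hn') (Finset.mem_range.mp hn'')]
    _ = (N:ℂ)^2 * ∑ n'' ∈ Finset.range N, c n'' := by
        simp_rw [mul_ite, mul_zero, Finset.sum_ite_eq, Finset.mem_range]
        rw [Finset.sum_congr rfl fun k' _ => Finset.sum_ite_of_true (fun n' hn' => Finset.mem_range.mp hn') _ _]
        rw [Finset.sum_const, Finset.card_range, nsmul_eq_mul, ← Finset.sum_mul]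
        ring

/-- Appendix B, equation (25c): `R^{(0,1)} = i π (T (N-1) M N + 2 N Σ_l g(l))`. -/
theorem stmt5 (M N : ℕ) (hM : 1 ≤ M) (hN : 1 ≤ N) (T : ℝ) (hT : 0 < T)
    (g : ℕ → ℝ) (x y : ℝ) :
    (2 * (Real.pi : ℂ) * Complex.I / ((M : ℂ) ^ 2 * (N : ℂ) ^ 2)) *
      (∑ k ∈ Finset.range N, ∑ k' ∈ Finset.range N,
        ∑ n' ∈ Finset.range N, ∑ n'' ∈ Finset.range N,
        ∑ l ∈ Finset.range M, ∑ l' ∈ Finset.range M,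
        ∑ m' ∈ Finset.range M, ∑ m'' ∈ Finset.range M,
          ((T * (n'' : ℝ) + g l' : ℝ) : ℂ)
          * Complex.exp (2 * (Real.pi : ℂ) * Complex.I
              * ((k' : ℂ) - (k : ℂ) + (y : ℂ)) * ((n'' : ℂ) - (n' : ℂ)) / (N : ℂ))
          * Complex.exp (2 * (Real.pi : ℂ) * Complex.I
              * ((l' : ℂ) - (l : ℂ) + (x : ℂ)) * ((m'' : ℂ) - (m' : ℂ)) / (M : ℂ)))
    = Complex.I * (Real.pi : ℂ)
        * (((T * ((N : ℝ) - 1) * (M : ℝ) * (N : ℝ)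
            + 2 * (N : ℝ) * ∑ l ∈ Finset.range M, g l : ℝ)) : ℂ) := by
  have hM0 : (M:ℂ) ≠ 0 := Nat.cast_ne_zero.mpr (by omega)
  have hN0 : (N:ℂ) ≠ 0 := Nat.cast_ne_zero.mpr (by omega)
  have hmain : (∑ k ∈ Finset.range N, ∑ k' ∈ Finset.range N,
        ∑ n' ∈ Finset.range N, ∑ n'' ∈ Finset.range N,
        ∑ l ∈ Finset.range M, ∑ l' ∈ Finset.range M,
        ∑ m' ∈ Finset.range M, ∑ m'' ∈ Finset.range M,
          ((T * (n'' : ℝ) + g l' : ℝ) : ℂ)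
          * Complex.exp (2 * (Real.pi : ℂ) * Complex.I
              * ((k' : ℂ) - (k : ℂ) + (y : ℂ)) * ((n'' : ℂ) - (n' : ℂ)) / (N : ℂ))
          * Complex.exp (2 * (Real.pi : ℂ) * Complex.I
              * ((l' : ℂ) - (l : ℂ) + (x : ℂ)) * ((m'' : ℂ) - (m' : ℂ)) / (M : ℂ)))
      = (M:ℂ)^2 * ((N:ℂ)^2 * ∑ n'' ∈ Finset.range N, ∑ l' ∈ Finset.range M,
          ((T * (n'' : ℝ) + g l' : ℝ) : ℂ)) := by
    have step1 : ∀ k k' n' n'' : ℕ,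
        (∑ l ∈ Finset.range M, ∑ l' ∈ Finset.range M,
          ∑ m' ∈ Finset.range M, ∑ m'' ∈ Finset.range M,
          ((T * (n'' : ℝ) + g l' : ℝ) : ℂ)
          * Complex.exp (2 * (Real.pi : ℂ) * Complex.I
              * ((k' : ℂ) - (k : ℂ) + (y : ℂ)) * ((n'' : ℂ) - (n' : ℂ)) / (N : ℂ))
          * Complex.exp (2 * (Real.pi : ℂ) * Complex.I
              * ((l' : ℂ) - (l : ℂ) + (x : ℂ)) * ((m'' : ℂ) - (m' : ℂ)) / (M : ℂ)))
        = (M:ℂ)^2 * ((∑ l' ∈ Finset.range M, ((T * (n'' : ℝ) + g l' : ℝ) : ℂ))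
            * Complex.exp (2 * (Real.pi : ℂ) * Complex.I
              * ((k' : ℂ) - (k : ℂ) + (y : ℂ)) * ((n'' : ℂ) - (n' : ℂ)) / (N : ℂ))) := by
      intro k k' n' n''
      rw [blockB M x (fun l' => ((T * (n'' : ℝ) + g l' : ℝ) : ℂ)
          * Complex.exp (2 * (Real.pi : ℂ) * Complex.I
              * ((k' : ℂ) - (k : ℂ) + (y : ℂ)) * ((n'' : ℂ) - (n' : ℂ)) / (N : ℂ)))]
      rw [← Finset.sum_mul]
    calc (∑ k ∈ Finset.range N, ∑ k' ∈ Finset.range N,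
        ∑ n' ∈ Finset.range N, ∑ n'' ∈ Finset.range N,
        ∑ l ∈ Finset.range M, ∑ l' ∈ Finset.range M,
        ∑ m' ∈ Finset.range M, ∑ m'' ∈ Finset.range M,
          ((T * (n'' : ℝ) + g l' : ℝ) : ℂ)
          * Complex.exp (2 * (Real.pi : ℂ) * Complex.I
              * ((k' : ℂ) - (k : ℂ) + (y : ℂ)) * ((n'' : ℂ) - (n' : ℂ)) / (N : ℂ))
          * Complex.exp (2 * (Real.pi : ℂ) * Complex.I
              * ((l' : ℂ) - (l : ℂ) + (x : ℂ)) * ((m'' : ℂ) - (m' : ℂ)) / (M : ℂ)))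
        = ∑ k ∈ Finset.range N, ∑ k' ∈ Finset.range N,
          ∑ n' ∈ Finset.range N, ∑ n'' ∈ Finset.range N,
            (M:ℂ)^2 * ((∑ l' ∈ Finset.range M, ((T * (n'' : ℝ) + g l' : ℝ) : ℂ))
            * Complex.exp (2 * (Real.pi : ℂ) * Complex.I
              * ((k' : ℂ) - (k : ℂ) + (y : ℂ)) * ((n'' : ℂ) - (n' : ℂ)) / (N : ℂ))) := by
          exact Finset.sum_congr rfl fun k _ => Finset.sum_congr rfl fun k' _ =>
            Finset.sum_congr rfl fun n' _ => Finset.sum_congr rfl fun n'' _ => step1 k k' n' n''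
      _ = (M:ℂ)^2 * ∑ k ∈ Finset.range N, ∑ k' ∈ Finset.range N,
          ∑ n' ∈ Finset.range N, ∑ n'' ∈ Finset.range N,
            ((∑ l' ∈ Finset.range M, ((T * (n'' : ℝ) + g l' : ℝ) : ℂ))
            * Complex.exp (2 * (Real.pi : ℂ) * Complex.I
              * ((k' : ℂ) - (k : ℂ) + (y : ℂ)) * ((n'' : ℂ) - (n' : ℂ)) / (N : ℂ))) := by
          simp_rw [← Finset.mul_sum]
      _ = (M:ℂ)^2 * ((N:ℂ)^2 * ∑ n'' ∈ Finset.range N, ∑ l' ∈ Finset.range M,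
          ((T * (n'' : ℝ) + g l' : ℝ) : ℂ)) := by
          rw [blockA N y (fun n'' => ∑ l' ∈ Finset.range M, ((T * (n'' : ℝ) + g l' : ℝ) : ℂ))]
  rw [hmain]
  have hsum : (∑ i ∈ Finset.range N, (i:ℂ)) * 2 = (N:ℂ) * ((N:ℂ) - 1) := by
    have h1 : (∑ i ∈ Finset.range N, i) * 2 = N * (N - 1) := Finset.sum_range_id_mul_two N
    have h2 : ((∑ i ∈ Finset.range N, i : ℕ) : ℂ) * 2 = ((N * (N-1) : ℕ) : ℂ) := by exact_mod_cast congrArg (Nat.cast (R := ℂ)) h1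
    push_cast [Nat.cast_sub hN] at h2
    push_cast
    exact h2
  have hS : (∑ n'' ∈ Finset.range N, ∑ l' ∈ Finset.range M, ((T * (n'' : ℝ) + g l' : ℝ) : ℂ))
      = (M:ℂ) * (T:ℂ) * (∑ i ∈ Finset.range N, (i:ℂ)) + (N:ℂ) * ((∑ l ∈ Finset.range M, g l : ℝ) : ℂ) := by
    push_cast
    simp only [Finset.sum_add_distrib, Finset.sum_const, Finset.card_range, nsmul_eq_mul]
    rw [Finset.mul_sum, Finset.mul_sum]
    congr 1
    exact Finset.sum_congr rfl fun n _ => by ring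
  rw [hS]
  push_cast
  field_simp
  ring_nf
  linear_combination (M:ℂ) * (T:ℂ) * hsum
end

section
/- Let M ≥ 1 and N ≥ 1 be natural numbers, let Δf > 0 and T > 0 be real numbers with T·Δf = 1, let g : {0,…,M−1} → ℝ be an arbitrary function, and let x, y be real numbers. Then ((2π)²Δf/(M²N²)) · Σ_{k,k',n',n''=0}^{N−1} Σ_{l,l',m',m''=0}^{M−1} m'·(T·n'' + g(l')) · exp(2πi(k'−k+y)(n''−n')/N) · exp(2πi(l'−l+x)(m''−m')/M) = π²(M−1)N·( (N−1)M + 2Δf·Σ_{l=0}^{M−1} g(l) ). -/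
open Finset Complex

lemma dir (N : ℕ) (a b : ℕ) (ha : a < N) (hb : b < N) :
    ∑ k ∈ Finset.range N, Complex.exp ((k : ℂ) * (2 * (Real.pi : ℂ) * Complex.I * ((b : ℂ) - a) / N))
      = if a = b then (N : ℂ) else 0 := by
  have hN : (N : ℂ) ≠ 0 := Nat.cast_ne_zero.mpr (by omega)
  have h2pi : (2 : ℂ) * (Real.pi : ℂ) * Complex.I ≠ 0 := by
    simp [Real.pi_ne_zero, Complex.I_ne_zero]
  by_cases h : a = b
  · subst h
    simp [sub_self, Finset.sum_const]
  · simp only [h, if_false]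
    set z : ℂ := 2 * (Real.pi : ℂ) * Complex.I * ((b : ℂ) - a) / N with hz
    have hz1 : Complex.exp z ≠ 1 := by
      intro hcon
      rw [Complex.exp_eq_one_iff] at hcon
      obtain ⟨n, hn⟩ := hcon
      rw [hz] at hn
      have hd : ((b : ℂ) - a) = n * N := by
        field_simp at hn
        apply mul_left_cancel₀ h2pi
        linear_combination (2 * (Real.pi : ℂ) * Complex.I) * hn
      have hdZ : (b : ℤ) - a = n * N := by exact_mod_cast hd
      have hNZ : (0 : ℤ) < N := by exact_mod_cast (by omega : 0 < N)
      have haZ : (a : ℤ) < N := by exact_mod_cast ha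
      have hbZ : (b : ℤ) < N := by exact_mod_cast hb
      have hab : (a : ℤ) ≠ b := by exact_mod_cast h
      rcases lt_trichotomy n 0 with h1 | h1 | h1
      · nlinarith [Int.natCast_nonneg a, Int.natCast_nonneg b]
      · subst h1; simp at hdZ; omega
      · nlinarith [Int.natCast_nonneg a, Int.natCast_nonneg b]
    have hpow : Complex.exp z ^ N = 1 := by
      rw [← Complex.exp_nat_mul]
      have : (N : ℂ) * z = (((b : ℤ) - a : ℤ) : ℂ) * (2 * (Real.pi : ℂ) * Complex.I) := by
        rw [hz]; push_cast; field_simp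
      rw [this, Complex.exp_int_mul_two_pi_mul_I]
    calc ∑ k ∈ Finset.range N, Complex.exp ((k : ℂ) * z)
        = ∑ k ∈ Finset.range N, Complex.exp z ^ k := by
          refine Finset.sum_congr rfl fun k _ => ?_
          rw [← Complex.exp_nat_mul]
      _ = (Complex.exp z ^ N - 1) / (Complex.exp z - 1) := geom_sum_eq hz1 N
      _ = 0 := by rw [hpow, sub_self, zero_div]

lemma key (N : ℕ) (v u w : ℕ → ℂ) (y : ℝ) :
    (∑ k ∈ Finset.range N, ∑ k' ∈ Finset.range N, ∑ n' ∈ Finset.range N, ∑ n'' ∈ Finset.range N,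
        v k' * u n' * w n'' *
          Complex.exp (2 * (Real.pi : ℂ) * Complex.I * ((k' : ℂ) - k + y) * ((n'' : ℂ) - n') / N))
    = N * (∑ j ∈ Finset.range N, v j) * (∑ n ∈ Finset.range N, u n * w n) := by
  rw [Finset.sum_comm]
  conv_lhs =>
    enter [2, k']
    rw [Finset.sum_comm]
    enter [2, n']
    rw [Finset.sum_comm]
  have step : ∀ k' ∈ Finset.range N, ∀ n' ∈ Finset.range N, ∀ n'' ∈ Finset.range N,
      (∑ k ∈ Finset.range N, v k' * u n' * w n'' *
        Complex.exp (2 * (Real.pi : ℂ) * Complex.I * ((k' : ℂ) - k + y) * ((n'' : ℂ) - n') / N))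
      = v k' * u n' * w n'' *
          Complex.exp (2 * (Real.pi : ℂ) * Complex.I * ((k' : ℂ) + y) * ((n'' : ℂ) - n') / N)
          * (if n'' = n' then (N : ℂ) else 0) := by
    intro k' _ n' hn' n'' hn''
    rw [← dir N n'' n' (Finset.mem_range.mp hn'') (Finset.mem_range.mp hn'), Finset.mul_sum]
    refine Finset.sum_congr rfl fun k _ => ?_
    rw [show Complex.exp (2 * (Real.pi : ℂ) * Complex.I * ((k' : ℂ) - k + y) * ((n'' : ℂ) - n') / N)
        = Complex.exp (2 * (Real.pi : ℂ) * Complex.I * ((k' : ℂ) + y) * ((n'' : ℂ) - n') / N)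
          * Complex.exp ((k : ℂ) * (2 * (Real.pi : ℂ) * Complex.I * ((n' : ℂ) - n'') / N)) from by
      rw [← Complex.exp_add]; congr 1; ring]
    ring
  calc (∑ k' ∈ Finset.range N, ∑ n' ∈ Finset.range N, ∑ n'' ∈ Finset.range N,
          ∑ k ∈ Finset.range N, v k' * u n' * w n'' *
            Complex.exp (2 * (Real.pi : ℂ) * Complex.I * ((k' : ℂ) - k + y) * ((n'' : ℂ) - n') / N))
      = ∑ k' ∈ Finset.range N, ∑ n' ∈ Finset.range N, v k' * u n' * w n' * (N : ℂ) := by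
        refine Finset.sum_congr rfl fun k' hk' => Finset.sum_congr rfl fun n' hn' => ?_
        rw [Finset.sum_congr rfl (fun n'' hn'' => step k' hk' n' hn' n'' hn'')]
        simp only [mul_ite, mul_zero]
        rw [Finset.sum_ite_eq' (Finset.range N) n'
          (fun n'' => v k' * u n' * w n'' *
            Complex.exp (2 * (Real.pi : ℂ) * Complex.I * ((k' : ℂ) + y) * ((n'' : ℂ) - n') / N) * N)]
        simp [hn', sub_self]
    _ = N * (∑ j ∈ Finset.range N, v j) * (∑ n ∈ Finset.range N, u n * w n) := by
        rw [mul_assoc, Finset.sum_mul_sum, Finset.mul_sum]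
        refine Finset.sum_congr rfl fun k' _ => ?_
        rw [Finset.mul_sum]
        exact Finset.sum_congr rfl fun n' _ => by ring

lemma quad_mul (s t : Finset ℕ) (F G : ℕ → ℕ → ℕ → ℕ → ℂ) :
    (∑ a ∈ s, ∑ b ∈ s, ∑ c ∈ s, ∑ d ∈ s, ∑ p ∈ t, ∑ q ∈ t, ∑ r ∈ t, ∑ e ∈ t,
        F a b c d * G p q r e)
    = (∑ a ∈ s, ∑ b ∈ s, ∑ c ∈ s, ∑ d ∈ s, F a b c d)
      * (∑ p ∈ t, ∑ q ∈ t, ∑ r ∈ t, ∑ e ∈ t, G p q r e) := by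
  simp only [← Finset.mul_sum, ← Finset.sum_mul]

/-- Appendix B, equation (25d). -/
theorem stmt6 (M N : ℕ) (hM : 1 ≤ M) (hN : 1 ≤ N) (Δf T : ℝ)
    (hΔf : 0 < Δf) (hT : 0 < T) (hTΔf : T * Δf = 1)
    (g : ℕ → ℝ) (x y : ℝ) :
    (((2 * Real.pi) ^ 2 * Δf : ℝ) : ℂ) / ((M : ℂ) ^ 2 * (N : ℂ) ^ 2) *
      (∑ k ∈ Finset.range N, ∑ k' ∈ Finset.range N,
        ∑ n' ∈ Finset.range N, ∑ n'' ∈ Finset.range N,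
        ∑ l ∈ Finset.range M, ∑ l' ∈ Finset.range M,
        ∑ m' ∈ Finset.range M, ∑ m'' ∈ Finset.range M,
          (m' : ℂ) * ((T * (n'' : ℝ) + g l' : ℝ) : ℂ)
          * Complex.exp (2 * (Real.pi : ℂ) * Complex.I
              * ((k' : ℂ) - (k : ℂ) + (y : ℂ)) * ((n'' : ℂ) - (n' : ℂ)) / (N : ℂ))
          * Complex.exp (2 * (Real.pi : ℂ) * Complex.I
              * ((l' : ℂ) - (l : ℂ) + (x : ℂ)) * ((m'' : ℂ) - (m' : ℂ)) / (M : ℂ)))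
    = ((Real.pi ^ 2 * ((M : ℝ) - 1) * (N : ℝ)
        * (((N : ℝ) - 1) * (M : ℝ) + 2 * Δf * ∑ l ∈ Finset.range M, g l) : ℝ) : ℂ) := by
  set EN : ℕ → ℕ → ℕ → ℕ → ℂ := fun k k' n' n'' =>
    Complex.exp (2 * (Real.pi : ℂ) * Complex.I
      * ((k' : ℂ) - (k : ℂ) + (y : ℂ)) * ((n'' : ℂ) - (n' : ℂ)) / (N : ℂ)) with hEN
  set EM : ℕ → ℕ → ℕ → ℕ → ℂ := fun l l' m' m'' =>
    Complex.exp (2 * (Real.pi : ℂ) * Complex.I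
      * ((l' : ℂ) - (l : ℂ) + (x : ℂ)) * ((m'' : ℂ) - (m' : ℂ)) / (M : ℂ)) with hEM
  have split : (∑ k ∈ Finset.range N, ∑ k' ∈ Finset.range N,
        ∑ n' ∈ Finset.range N, ∑ n'' ∈ Finset.range N,
        ∑ l ∈ Finset.range M, ∑ l' ∈ Finset.range M,
        ∑ m' ∈ Finset.range M, ∑ m'' ∈ Finset.range M,
          (m' : ℂ) * ((T * (n'' : ℝ) + g l' : ℝ) : ℂ) * EN k k' n' n'' * EM l l' m' m'')
      = (∑ k ∈ Finset.range N, ∑ k' ∈ Finset.range N,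
          ∑ n' ∈ Finset.range N, ∑ n'' ∈ Finset.range N,
          (1 : ℂ) * 1 * ((T : ℂ) * (n'' : ℂ)) * EN k k' n' n'')
        * (∑ l ∈ Finset.range M, ∑ l' ∈ Finset.range M,
            ∑ m' ∈ Finset.range M, ∑ m'' ∈ Finset.range M,
            (1 : ℂ) * (m' : ℂ) * 1 * EM l l' m' m'')
        + (∑ k ∈ Finset.range N, ∑ k' ∈ Finset.range N,
            ∑ n' ∈ Finset.range N, ∑ n'' ∈ Finset.range N,
            (1 : ℂ) * 1 * 1 * EN k k' n' n'')
          * (∑ l ∈ Finset.range M, ∑ l' ∈ Finset.range M,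
              ∑ m' ∈ Finset.range M, ∑ m'' ∈ Finset.range M,
              ((g l' : ℝ) : ℂ) * (m' : ℂ) * 1 * EM l l' m' m'') := by
    rw [← quad_mul (Finset.range N) (Finset.range M)
        (fun k k' n' n'' => (1 : ℂ) * 1 * ((T : ℂ) * (n'' : ℂ)) * EN k k' n' n'')
        (fun l l' m' m'' => (1 : ℂ) * (m' : ℂ) * 1 * EM l l' m' m''),
      ← quad_mul (Finset.range N) (Finset.range M)
        (fun k k' n' n'' => (1 : ℂ) * 1 * 1 * EN k k' n' n'')
        (fun l l' m' m'' => ((g l' : ℝ) : ℂ) * (m' : ℂ) * 1 * EM l l' m' m'')]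
    simp only [← Finset.sum_add_distrib]
    refine Finset.sum_congr rfl fun k _ => Finset.sum_congr rfl fun k' _ => ?_
    refine Finset.sum_congr rfl fun n' _ => Finset.sum_congr rfl fun n'' _ => ?_
    refine Finset.sum_congr rfl fun l _ => Finset.sum_congr rfl fun l' _ => ?_
    refine Finset.sum_congr rfl fun m' _ => Finset.sum_congr rfl fun m'' _ => ?_
    push_cast
    ring
  rw [split, key N (fun _ => 1) (fun _ => 1) (fun n => (T : ℂ) * n) y,
    key M (fun _ => 1) (fun m => (m : ℂ)) (fun _ => 1) x,
    key N (fun _ => 1) (fun _ => 1) (fun _ => 1) y,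
    key M (fun l' => ((g l' : ℝ) : ℂ)) (fun m => (m : ℂ)) (fun _ => 1) x]
  simp only [one_mul, mul_one, Finset.sum_const, Finset.card_range, nsmul_eq_mul]
  have hM0 : (M : ℂ) ≠ 0 := Nat.cast_ne_zero.mpr (by omega)
  have hN0 : (N : ℂ) ≠ 0 := Nat.cast_ne_zero.mpr (by omega)
  have hsN : (∑ n ∈ Finset.range N, (n : ℂ)) * 2 = (N : ℂ) * ((N : ℂ) - 1) := by
    have h1 := Finset.sum_range_id_mul_two N
    have h2 : (((∑ i ∈ Finset.range N, i) * 2 : ℕ) : ℂ) = ((N * (N - 1) : ℕ) : ℂ) := by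
      exact_mod_cast congrArg (Nat.cast : ℕ → ℂ) h1
    push_cast [Nat.cast_sub hN] at h2
    exact_mod_cast h2
  have hsM : (∑ n ∈ Finset.range M, (n : ℂ)) * 2 = (M : ℂ) * ((M : ℂ) - 1) := by
    have h1 := Finset.sum_range_id_mul_two M
    have h2 : (((∑ i ∈ Finset.range M, i) * 2 : ℕ) : ℂ) = ((M * (M - 1) : ℕ) : ℂ) := by
      exact_mod_cast congrArg (Nat.cast : ℕ → ℂ) h1
    push_cast [Nat.cast_sub hM] at h2
    exact_mod_cast h2
  have hg : (∑ l ∈ Finset.range M, ((g l : ℝ) : ℂ)) = (((∑ l ∈ Finset.range M, g l : ℝ)) : ℂ) := by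
    push_cast
    ring
  have hT' : (T : ℂ) * (Δf : ℂ) = 1 := by exact_mod_cast congrArg (Complex.ofReal : ℝ → ℂ) hTΔf
  have hsN' : (∑ n ∈ Finset.range N, (n : ℂ)) = (N : ℂ) * ((N : ℂ) - 1) / 2 := by
    linear_combination hsN / 2
  have hsM' : (∑ n ∈ Finset.range M, (n : ℂ)) = (M : ℂ) * ((M : ℂ) - 1) / 2 := by
    linear_combination hsM / 2
  rw [show (∑ n ∈ Finset.range N, (T : ℂ) * n) = (T : ℂ) * ∑ n ∈ Finset.range N, (n : ℂ) from
    (Finset.mul_sum _ _ _).symm]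
  rw [hsN', hsM', hg]
  push_cast
  field_simp
  linear_combination (((M : ℂ) - 1) * ((N : ℂ) - 1) * (M : ℂ)) * hT'
end

section
/- Let M ≥ 1 and N ≥ 1 be natural numbers, Δf > 0 a real number, and x, y real numbers. Then ((2πΔf)²/(M²N²)) · Σ_{k,k',n',n''=0}^{N−1} Σ_{l,l',m',m''=0}^{M−1} m'·m'' · exp(2πi(k'−k+y)(n''−n')/N) · exp(2πi(l'−l+x)(m''−m')/M) = (2πΔf)²·(M−1)·M·N·(2M−1)/6. -/
open Finset Complex

section helpers

private lemma swap4' {α : Type*} [AddCommMonoid α] (s t u v : Finset ℕ) (f : ℕ → ℕ → ℕ → ℕ → α) :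
    (∑ a ∈ s, ∑ b ∈ t, ∑ c ∈ u, ∑ d ∈ v, f a b c d)
      = ∑ c ∈ u, ∑ d ∈ v, ∑ a ∈ s, ∑ b ∈ t, f a b c d := by
  calc (∑ a ∈ s, ∑ b ∈ t, ∑ c ∈ u, ∑ d ∈ v, f a b c d)
      = ∑ a ∈ s, ∑ c ∈ u, ∑ b ∈ t, ∑ d ∈ v, f a b c d :=
        Finset.sum_congr rfl fun a _ => Finset.sum_comm
    _ = ∑ c ∈ u, ∑ a ∈ s, ∑ b ∈ t, ∑ d ∈ v, f a b c d := Finset.sum_comm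
    _ = ∑ c ∈ u, ∑ a ∈ s, ∑ d ∈ v, ∑ b ∈ t, f a b c d :=
        Finset.sum_congr rfl fun c _ => Finset.sum_congr rfl fun a _ => Finset.sum_comm
    _ = ∑ c ∈ u, ∑ d ∈ v, ∑ a ∈ s, ∑ b ∈ t, f a b c d :=
        Finset.sum_congr rfl fun c _ => Finset.sum_comm

private lemma exp_geom' (N a b : ℕ) (ha : a < N) (hb : b < N) (hab : a ≠ b) (c : ℂ) :
    ∑ j ∈ Finset.range N,
      Complex.exp (2 * (Real.pi : ℂ) * Complex.I * ((j : ℂ) + c) * ((a:ℂ)-(b:ℂ)) / (N:ℂ)) = 0 := by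
  have hN0 : (N : ℂ) ≠ 0 := Nat.cast_ne_zero.mpr (by omega)
  have h2πI : (2 * (Real.pi : ℂ) * Complex.I) ≠ 0 := by
    simp [Real.pi_ne_zero, Complex.I_ne_zero, Complex.ofReal_ne_zero]
  set ω : ℂ := Complex.exp (2 * (Real.pi : ℂ) * Complex.I * ((a:ℂ)-(b:ℂ)) / (N:ℂ)) with hω
  have hterm : ∀ j : ℕ,
      Complex.exp (2 * (Real.pi : ℂ) * Complex.I * ((j : ℂ) + c) * ((a:ℂ)-(b:ℂ)) / (N:ℂ))
        = Complex.exp (2 * (Real.pi : ℂ) * Complex.I * c * ((a:ℂ)-(b:ℂ)) / (N:ℂ)) * ω ^ j := by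
    intro j
    rw [hω, ← Complex.exp_nat_mul, ← Complex.exp_add]
    congr 1
    field_simp
    ring
  have hω1 : ω ≠ 1 := by
    intro h
    rw [hω, Complex.exp_eq_one_iff] at h
    obtain ⟨n, hn⟩ := h
    have hd : ((a:ℂ) - (b:ℂ)) = (n : ℂ) * (N : ℂ) := by
      have hn' : (2 * (Real.pi : ℂ) * Complex.I) * (((a:ℂ)-(b:ℂ)) / (N:ℂ))
          = (2 * (Real.pi : ℂ) * Complex.I) * (n : ℂ) := by
        linear_combination hn
      have := mul_left_cancel₀ h2πI hn'
      field_simp at this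
      linear_combination this
    have hdZ : (a : ℤ) - (b : ℤ) = n * N := by exact_mod_cast hd
    have habs : |(a : ℤ) - (b : ℤ)| < (N : ℤ) := by
      rw [abs_sub_lt_iff]; omega
    have hdvd : ((N : ℤ)) ∣ ((a : ℤ) - (b : ℤ)) := ⟨n, by linarith⟩
    have := Int.eq_zero_of_abs_lt_dvd hdvd habs
    omega
  have hωN : ω ^ N = 1 := by
    rw [hω, ← Complex.exp_nat_mul]
    have : (N : ℂ) * (2 * (Real.pi : ℂ) * Complex.I * ((a:ℂ)-(b:ℂ)) / (N:ℂ))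
        = (((a : ℤ) - (b : ℤ) : ℤ) : ℂ) * (2 * (Real.pi : ℂ) * Complex.I) := by
      push_cast
      field_simp
    rw [this, Complex.exp_int_mul_two_pi_mul_I]
  calc ∑ j ∈ Finset.range N,
        Complex.exp (2 * (Real.pi : ℂ) * Complex.I * ((j : ℂ) + c) * ((a:ℂ)-(b:ℂ)) / (N:ℂ))
      = ∑ j ∈ Finset.range N,
        Complex.exp (2 * (Real.pi : ℂ) * Complex.I * c * ((a:ℂ)-(b:ℂ)) / (N:ℂ)) * ω ^ j :=
        Finset.sum_congr rfl fun j _ => hterm j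
    _ = Complex.exp (2 * (Real.pi : ℂ) * Complex.I * c * ((a:ℂ)-(b:ℂ)) / (N:ℂ))
          * ∑ j ∈ Finset.range N, ω ^ j := by rw [Finset.mul_sum]
    _ = 0 := by rw [geom_sum_eq hω1, hωN]; simp

private lemma exp_geom'' (N a b w : ℕ) (ha : a < N) (hb : b < N) (hab : a ≠ b) (z : ℝ) :
    ∑ j ∈ Finset.range N,
      Complex.exp (2 * (Real.pi : ℂ) * Complex.I * ((j : ℂ) - (w : ℂ) + (z : ℂ))
        * ((a:ℂ)-(b:ℂ)) / (N:ℂ)) = 0 := by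
  rw [← exp_geom' N a b ha hb hab ((z : ℂ) - (w : ℂ))]
  refine Finset.sum_congr rfl fun j _ => ?_
  congr 1
  ring

private lemma sum_sq' (M : ℕ) :
    ∑ m ∈ Finset.range M, (m : ℂ) ^ 2 = (M:ℂ) * ((M:ℂ) - 1) * (2 * (M:ℂ) - 1) / 6 := by
  induction M with
  | zero => simp
  | succ n ih => rw [Finset.sum_range_succ, ih]; push_cast; ring

private lemma Ssum (N : ℕ) (hN : 1 ≤ N) (y : ℝ) :
    (∑ k ∈ Finset.range N, ∑ k' ∈ Finset.range N,
      ∑ n' ∈ Finset.range N, ∑ n'' ∈ Finset.range N,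
        Complex.exp (2 * (Real.pi : ℂ) * Complex.I
          * ((k' : ℂ) - (k : ℂ) + (y : ℂ)) * ((n'' : ℂ) - (n' : ℂ)) / (N : ℂ)))
      = (N : ℂ) ^ 3 := by
  rw [swap4']
  have h1 : ∀ n' ∈ Finset.range N,
      (∑ n'' ∈ Finset.range N, ∑ k ∈ Finset.range N, ∑ k' ∈ Finset.range N,
        Complex.exp (2 * (Real.pi : ℂ) * Complex.I
          * ((k' : ℂ) - (k : ℂ) + (y : ℂ)) * ((n'' : ℂ) - (n' : ℂ)) / (N : ℂ)))
        = (N : ℂ) ^ 2 := by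
    intro n' hn'
    rw [Finset.mem_range] at hn'
    rw [Finset.sum_eq_single n']
    · simp [Finset.sum_const, Finset.card_range]; ring
    · intro n'' hn'' hne
      rw [Finset.mem_range] at hn''
      refine Finset.sum_eq_zero fun k _ => ?_
      exact exp_geom'' N n'' n' k hn'' hn' hne y
    · intro h; exact absurd (Finset.mem_range.mpr hn') h
  rw [Finset.sum_congr rfl h1]
  simp [Finset.sum_const, Finset.card_range]
  ring

private lemma Tsum (M : ℕ) (hM : 1 ≤ M) (x : ℝ) :
    (∑ l ∈ Finset.range M, ∑ l' ∈ Finset.range M,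
      ∑ m' ∈ Finset.range M, ∑ m'' ∈ Finset.range M,
        (m' : ℂ) * (m'' : ℂ) * Complex.exp (2 * (Real.pi : ℂ) * Complex.I
          * ((l' : ℂ) - (l : ℂ) + (x : ℂ)) * ((m'' : ℂ) - (m' : ℂ)) / (M : ℂ)))
      = (M : ℂ) ^ 2 * ((M:ℂ) * ((M:ℂ) - 1) * (2 * (M:ℂ) - 1) / 6) := by
  rw [swap4']
  have h1 : ∀ m' ∈ Finset.range M,
      (∑ m'' ∈ Finset.range M, ∑ l ∈ Finset.range M, ∑ l' ∈ Finset.range M,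
        (m' : ℂ) * (m'' : ℂ) * Complex.exp (2 * (Real.pi : ℂ) * Complex.I
          * ((l' : ℂ) - (l : ℂ) + (x : ℂ)) * ((m'' : ℂ) - (m' : ℂ)) / (M : ℂ)))
        = (M : ℂ) ^ 2 * (m' : ℂ) ^ 2 := by
    intro m' hm'
    rw [Finset.mem_range] at hm'
    rw [Finset.sum_eq_single m']
    · simp [Finset.sum_const, Finset.card_range]; ring
    · intro m'' hm'' hne
      rw [Finset.mem_range] at hm''
      refine Finset.sum_eq_zero fun l _ => ?_
      rw [show (∑ l' ∈ Finset.range M,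
          (m' : ℂ) * (m'' : ℂ) * Complex.exp (2 * (Real.pi : ℂ) * Complex.I
            * ((l' : ℂ) - (l : ℂ) + (x : ℂ)) * ((m'' : ℂ) - (m' : ℂ)) / (M : ℂ)))
          = (m' : ℂ) * (m'' : ℂ) * ∑ l' ∈ Finset.range M,
            Complex.exp (2 * (Real.pi : ℂ) * Complex.I
              * ((l' : ℂ) - (l : ℂ) + (x : ℂ)) * ((m'' : ℂ) - (m' : ℂ)) / (M : ℂ))
          from Finset.mul_sum _ _ _ |>.symm]
      rw [exp_geom'' M m'' m' l hm'' hm' hne x, mul_zero]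
    · intro h; exact absurd (Finset.mem_range.mpr hm') h
  rw [Finset.sum_congr rfl h1, ← Finset.mul_sum, sum_sq']

end helpers

/-- Appendix B, equation (25e): `R^{(2,0)} = (2πΔf)² (M-1) M N (2M-1) / 6`. -/
theorem stmt7 (M N : ℕ) (hM : 1 ≤ M) (hN : 1 ≤ N) (Δf : ℝ) (hΔf : 0 < Δf)
    (x y : ℝ) :
    (((2 * Real.pi * Δf) ^ 2 : ℝ) : ℂ) / ((M : ℂ) ^ 2 * (N : ℂ) ^ 2) *
      (∑ k ∈ Finset.range N, ∑ k' ∈ Finset.range N,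
        ∑ n' ∈ Finset.range N, ∑ n'' ∈ Finset.range N,
        ∑ l ∈ Finset.range M, ∑ l' ∈ Finset.range M,
        ∑ m' ∈ Finset.range M, ∑ m'' ∈ Finset.range M,
          (m' : ℂ) * (m'' : ℂ)
          * Complex.exp (2 * (Real.pi : ℂ) * Complex.I
              * ((k' : ℂ) - (k : ℂ) + (y : ℂ)) * ((n'' : ℂ) - (n' : ℂ)) / (N : ℂ))
          * Complex.exp (2 * (Real.pi : ℂ) * Complex.I
              * ((l' : ℂ) - (l : ℂ) + (x : ℂ)) * ((m'' : ℂ) - (m' : ℂ)) / (M : ℂ)))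
    = (((2 * Real.pi * Δf) ^ 2 * ((M : ℝ) - 1) * (M : ℝ) * (N : ℝ)
        * (2 * (M : ℝ) - 1) / 6 : ℝ) : ℂ) := by
  have hfac : (∑ k ∈ Finset.range N, ∑ k' ∈ Finset.range N,
        ∑ n' ∈ Finset.range N, ∑ n'' ∈ Finset.range N,
        ∑ l ∈ Finset.range M, ∑ l' ∈ Finset.range M,
        ∑ m' ∈ Finset.range M, ∑ m'' ∈ Finset.range M,
          (m' : ℂ) * (m'' : ℂ)
          * Complex.exp (2 * (Real.pi : ℂ) * Complex.I
              * ((k' : ℂ) - (k : ℂ) + (y : ℂ)) * ((n'' : ℂ) - (n' : ℂ)) / (N : ℂ))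
          * Complex.exp (2 * (Real.pi : ℂ) * Complex.I
              * ((l' : ℂ) - (l : ℂ) + (x : ℂ)) * ((m'' : ℂ) - (m' : ℂ)) / (M : ℂ)))
      = (∑ k ∈ Finset.range N, ∑ k' ∈ Finset.range N,
          ∑ n' ∈ Finset.range N, ∑ n'' ∈ Finset.range N,
            Complex.exp (2 * (Real.pi : ℂ) * Complex.I
              * ((k' : ℂ) - (k : ℂ) + (y : ℂ)) * ((n'' : ℂ) - (n' : ℂ)) / (N : ℂ)))
        * (∑ l ∈ Finset.range M, ∑ l' ∈ Finset.range M,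
          ∑ m' ∈ Finset.range M, ∑ m'' ∈ Finset.range M,
            (m' : ℂ) * (m'' : ℂ) * Complex.exp (2 * (Real.pi : ℂ) * Complex.I
              * ((l' : ℂ) - (l : ℂ) + (x : ℂ)) * ((m'' : ℂ) - (m' : ℂ)) / (M : ℂ))) := by
    rw [show (∑ k ∈ Finset.range N, ∑ k' ∈ Finset.range N,
          ∑ n' ∈ Finset.range N, ∑ n'' ∈ Finset.range N,
            Complex.exp (2 * (Real.pi : ℂ) * Complex.I
              * ((k' : ℂ) - (k : ℂ) + (y : ℂ)) * ((n'' : ℂ) - (n' : ℂ)) / (N : ℂ)))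
        * (∑ l ∈ Finset.range M, ∑ l' ∈ Finset.range M,
          ∑ m' ∈ Finset.range M, ∑ m'' ∈ Finset.range M,
            (m' : ℂ) * (m'' : ℂ) * Complex.exp (2 * (Real.pi : ℂ) * Complex.I
              * ((l' : ℂ) - (l : ℂ) + (x : ℂ)) * ((m'' : ℂ) - (m' : ℂ)) / (M : ℂ)))
        = ∑ k ∈ Finset.range N, ∑ k' ∈ Finset.range N,
          ∑ n' ∈ Finset.range N, ∑ n'' ∈ Finset.range N,
            Complex.exp (2 * (Real.pi : ℂ) * Complex.I
              * ((k' : ℂ) - (k : ℂ) + (y : ℂ)) * ((n'' : ℂ) - (n' : ℂ)) / (N : ℂ))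
            * (∑ l ∈ Finset.range M, ∑ l' ∈ Finset.range M,
              ∑ m' ∈ Finset.range M, ∑ m'' ∈ Finset.range M,
                (m' : ℂ) * (m'' : ℂ) * Complex.exp (2 * (Real.pi : ℂ) * Complex.I
                  * ((l' : ℂ) - (l : ℂ) + (x : ℂ)) * ((m'' : ℂ) - (m' : ℂ)) / (M : ℂ)))
        from by simp only [Finset.sum_mul]]
    refine Finset.sum_congr rfl fun k _ => Finset.sum_congr rfl fun k' _ =>
      Finset.sum_congr rfl fun n' _ => Finset.sum_congr rfl fun n'' _ => ?_
    simp only [Finset.mul_sum]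
    refine Finset.sum_congr rfl fun l _ => Finset.sum_congr rfl fun l' _ =>
      Finset.sum_congr rfl fun m' _ => Finset.sum_congr rfl fun m'' _ => by ring
  rw [hfac, Ssum N hN y, Tsum M hM x]
  have hM0 : ((M : ℂ)) ≠ 0 := Nat.cast_ne_zero.mpr (by omega)
  have hN0 : ((N : ℂ)) ≠ 0 := Nat.cast_ne_zero.mpr (by omega)
  push_cast
  field_simp
end

section
/- Let M ≥ 1 and N ≥ 1 be natural numbers, T > 0 a real number, g : {0,…,M−1} → ℝ an arbitrary function, and x, y real numbers. Then ((2π)²/(M²N²)) · Σ_{k,k',n',n''=0}^{N−1} Σ_{l,l',m',m''=0}^{M−1} (T·n' + g(l'))·(T·n'' + g(l')) · exp(2πi(k'−k+y)(n''−n')/N) · exp(2πi(l'−l+x)(m''−m')/M) = (2πT)²·(N−1)·M·N·(2N−1)/6 + (2π)²·N·Σ_{l=0}^{M−1} g(l)² + (2π)²·T·(N−1)·N·Σ_{l=0}^{M−1} g(l). -/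
open Finset Complex

private lemma geo (N : ℕ) (hN : 0 < N) (d : ℤ) :
    ∑ k ∈ Finset.range N,
      Complex.exp (2 * (Real.pi : ℂ) * Complex.I * (d : ℂ) * (k : ℂ) / (N : ℂ))
      = if (N : ℤ) ∣ d then (N : ℂ) else 0 := by
  have hN0 : (N : ℂ) ≠ 0 := Nat.cast_ne_zero.2 hN.ne'
  by_cases h : (N : ℤ) ∣ d
  · obtain ⟨e, rfl⟩ := h
    have h1 : ∀ k ∈ Finset.range N,
        Complex.exp (2 * (Real.pi : ℂ) * Complex.I * (((N : ℤ) * e : ℤ) : ℂ) * (k : ℂ) / (N : ℂ)) = 1 := by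
      intro k _
      rw [show 2 * (Real.pi : ℂ) * Complex.I * (((N : ℤ) * e : ℤ) : ℂ) * (k : ℂ) / (N : ℂ)
          = ((e * k : ℤ) : ℂ) * (2 * (Real.pi : ℂ) * Complex.I) by push_cast; field_simp]
      exact Complex.exp_int_mul_two_pi_mul_I _
    rw [Finset.sum_congr rfl h1]
    simp
  · rw [if_neg h]
    set ζ := Complex.exp (2 * (Real.pi : ℂ) * Complex.I * (d : ℂ) / (N : ℂ)) with hζ
    have hpow : ∀ k ∈ Finset.range N,
        Complex.exp (2 * (Real.pi : ℂ) * Complex.I * (d : ℂ) * (k : ℂ) / (N : ℂ)) = ζ ^ k := by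
      intro k _
      rw [hζ, ← Complex.exp_nat_mul]
      congr 1
      ring
    have hζ1 : ζ ≠ 1 := by
      intro hone
      rw [hζ, Complex.exp_eq_one_iff] at hone
      obtain ⟨n, hn⟩ := hone
      have hd : (d : ℂ) = (n : ℂ) * (N : ℂ) := by
        have h2 : (2 * (Real.pi : ℂ) * Complex.I) ≠ 0 := by
          simp [Complex.I_ne_zero, Real.pi_ne_zero, Complex.ofReal_ne_zero]
        field_simp at hn
        -- hn : 2 * π * I * d = n * (2 * π * I) * N  (some arrangement)
        apply mul_left_cancel₀ h2
        linear_combination (2 * (Real.pi : ℂ) * Complex.I) * hn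
      have : d = n * N := by exact_mod_cast hd
      exact h ⟨n, by rw [this]; ring⟩
    have hζN : ζ ^ N = 1 := by
      rw [hζ, ← Complex.exp_nat_mul]
      rw [show (N : ℂ) * (2 * (Real.pi : ℂ) * Complex.I * (d : ℂ) / (N : ℂ))
          = (d : ℂ) * (2 * (Real.pi : ℂ) * Complex.I) by field_simp]
      exact Complex.exp_int_mul_two_pi_mul_I _
    rw [Finset.sum_congr rfl hpow, geom_sum_eq hζ1, hζN]
    simp

private lemma Mblock (M : ℕ) (hM : 0 < M) (x : ℝ) (l' : ℕ) :
    ∑ l ∈ Finset.range M, ∑ m' ∈ Finset.range M, ∑ m'' ∈ Finset.range M,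
      Complex.exp (2 * (Real.pi : ℂ) * Complex.I
          * ((l' : ℂ) - (l : ℂ) + (x : ℂ)) * ((m'' : ℂ) - (m' : ℂ)) / (M : ℂ))
    = (M : ℂ) ^ 2 := by
  have hM0 : (M : ℂ) ≠ 0 := Nat.cast_ne_zero.2 hM.ne'
  rw [Finset.sum_comm]
  have key : ∀ m' ∈ Finset.range M, ∀ m'' ∈ Finset.range M,
      ∑ l ∈ Finset.range M, Complex.exp (2 * (Real.pi : ℂ) * Complex.I
          * ((l' : ℂ) - (l : ℂ) + (x : ℂ)) * ((m'' : ℂ) - (m' : ℂ)) / (M : ℂ))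
      = if m'' = m' then (M : ℂ) else 0 := by
    intro m' hm' m'' hm''
    rcases eq_or_ne m'' m' with h | h
    · subst h
      rw [if_pos rfl]
      have h1 : ∀ l ∈ Finset.range M, Complex.exp (2 * (Real.pi : ℂ) * Complex.I
          * ((l' : ℂ) - (l : ℂ) + (x : ℂ)) * ((m'' : ℂ) - (m'' : ℂ)) / (M : ℂ)) = 1 := by
        intro l _
        simp [sub_self]
      rw [Finset.sum_congr rfl h1]
      simp
    · rw [if_neg h]
      have hsplit : ∀ l ∈ Finset.range M, Complex.exp (2 * (Real.pi : ℂ) * Complex.I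
          * ((l' : ℂ) - (l : ℂ) + (x : ℂ)) * ((m'' : ℂ) - (m' : ℂ)) / (M : ℂ))
          = Complex.exp (2 * (Real.pi : ℂ) * Complex.I
              * ((l' : ℂ) + (x : ℂ)) * ((m'' : ℂ) - (m' : ℂ)) / (M : ℂ))
            * Complex.exp (2 * (Real.pi : ℂ) * Complex.I
              * (((m' : ℤ) - (m'' : ℤ) : ℤ) : ℂ) * (l : ℂ) / (M : ℂ)) := by
        intro l _
        rw [← Complex.exp_add]
        congr 1
        push_cast
        field_simp
        ring
      rw [Finset.sum_congr rfl hsplit, ← Finset.mul_sum, geo M hM ((m' : ℤ) - (m'' : ℤ))]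
      have hnd : ¬ ((M : ℤ) ∣ ((m' : ℤ) - (m'' : ℤ))) := by
        intro hd
        have hne : (m' : ℤ) - (m'' : ℤ) ≠ 0 := by
          simp only [sub_ne_zero]
          exact fun hh => h (by exact_mod_cast hh.symm)
        have h1 : (M : ℤ) ≤ |(m' : ℤ) - (m'' : ℤ)| :=
          Int.le_of_dvd (abs_pos.2 hne) ((dvd_abs _ _).2 hd)
        have h2 : |(m' : ℤ) - (m'' : ℤ)| < (M : ℤ) := by
          rw [abs_lt]
          have := Finset.mem_range.1 hm'
          have := Finset.mem_range.1 hm''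
          omega
        omega
      rw [if_neg hnd, mul_zero]
  calc ∑ m' ∈ Finset.range M, ∑ l ∈ Finset.range M, ∑ m'' ∈ Finset.range M,
        Complex.exp (2 * (Real.pi : ℂ) * Complex.I
          * ((l' : ℂ) - (l : ℂ) + (x : ℂ)) * ((m'' : ℂ) - (m' : ℂ)) / (M : ℂ))
      = ∑ m' ∈ Finset.range M, ∑ m'' ∈ Finset.range M, ∑ l ∈ Finset.range M,
        Complex.exp (2 * (Real.pi : ℂ) * Complex.I
          * ((l' : ℂ) - (l : ℂ) + (x : ℂ)) * ((m'' : ℂ) - (m' : ℂ)) / (M : ℂ)) :=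
        Finset.sum_congr rfl fun m' _ => Finset.sum_comm
    _ = ∑ m' ∈ Finset.range M, ∑ m'' ∈ Finset.range M,
          (if m'' = m' then (M : ℂ) else 0) :=
        Finset.sum_congr rfl fun m' hm' => Finset.sum_congr rfl fun m'' hm'' =>
          key m' hm' m'' hm''
    _ = (M : ℂ) ^ 2 := by
        have : ∀ m' ∈ Finset.range M,
            ∑ m'' ∈ Finset.range M, (if m'' = m' then (M : ℂ) else 0) = (M : ℂ) := by
          intro m' hm'
          rw [Finset.sum_ite_eq' (Finset.range M) m' (fun _ => (M : ℂ))]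
          simp [Finset.mem_range.1 hm']
        rw [Finset.sum_congr rfl this]
        simp [sq]

private lemma Nblock (N : ℕ) (hN : 0 < N) (y : ℝ) (n' n'' : ℕ) (h1 : n' < N) (h2 : n'' < N) :
    ∑ k ∈ Finset.range N, ∑ k' ∈ Finset.range N,
      Complex.exp (2 * (Real.pi : ℂ) * Complex.I
        * ((k' : ℂ) - (k : ℂ) + (y : ℂ)) * ((n'' : ℂ) - (n' : ℂ)) / (N : ℂ))
    = if n' = n'' then (N : ℂ) ^ 2 else 0 := by
  have hN0 : (N : ℂ) ≠ 0 := Nat.cast_ne_zero.2 hN.ne'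
  rcases eq_or_ne n' n'' with h | h
  · subst h
    rw [if_pos rfl]
    have h1 : ∀ k ∈ Finset.range N, ∀ k' ∈ Finset.range N,
        Complex.exp (2 * (Real.pi : ℂ) * Complex.I
          * ((k' : ℂ) - (k : ℂ) + (y : ℂ)) * ((n' : ℂ) - (n' : ℂ)) / (N : ℂ)) = 1 := by
      intro k _ k' _
      simp [sub_self]
    rw [Finset.sum_congr rfl fun k hk => Finset.sum_congr rfl (h1 k hk)]
    simp [sq]
  · rw [if_neg h]
    have inner0 : ∀ k ∈ Finset.range N,
        ∑ k' ∈ Finset.range N, Complex.exp (2 * (Real.pi : ℂ) * Complex.I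
          * ((k' : ℂ) - (k : ℂ) + (y : ℂ)) * ((n'' : ℂ) - (n' : ℂ)) / (N : ℂ)) = 0 := by
      intro k _
      have hsplit : ∀ k' ∈ Finset.range N, Complex.exp (2 * (Real.pi : ℂ) * Complex.I
          * ((k' : ℂ) - (k : ℂ) + (y : ℂ)) * ((n'' : ℂ) - (n' : ℂ)) / (N : ℂ))
          = Complex.exp (2 * (Real.pi : ℂ) * Complex.I
              * ((y : ℂ) - (k : ℂ)) * ((n'' : ℂ) - (n' : ℂ)) / (N : ℂ))
            * Complex.exp (2 * (Real.pi : ℂ) * Complex.I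
              * (((n'' : ℤ) - (n' : ℤ) : ℤ) : ℂ) * (k' : ℂ) / (N : ℂ)) := by
        intro k' _
        rw [← Complex.exp_add]
        congr 1
        push_cast
        field_simp
        ring
      rw [Finset.sum_congr rfl hsplit, ← Finset.mul_sum, geo N hN ((n'' : ℤ) - (n' : ℤ))]
      have hnd : ¬ ((N : ℤ) ∣ ((n'' : ℤ) - (n' : ℤ))) := by
        intro hd
        have hne : (n'' : ℤ) - (n' : ℤ) ≠ 0 := by
          simp only [sub_ne_zero]
          exact fun hh => h (by exact_mod_cast hh.symm)
        have hle : (N : ℤ) ≤ |(n'' : ℤ) - (n' : ℤ)| :=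
          Int.le_of_dvd (abs_pos.2 hne) ((dvd_abs _ _).2 hd)
        have hlt : |(n'' : ℤ) - (n' : ℤ)| < (N : ℤ) := by
          rw [abs_lt]; omega
        omega
      rw [if_neg hnd, mul_zero]
    rw [Finset.sum_congr rfl inner0]
    simp

private lemma sum_range_cast (N : ℕ) :
    ∑ n ∈ Finset.range N, (n : ℝ) = (N : ℝ) * ((N : ℝ) - 1) / 2 := by
  induction N with
  | zero => simp
  | succ n ih => rw [Finset.sum_range_succ, ih]; push_cast; ring

private lemma sum_range_sq_cast (N : ℕ) :
    ∑ n ∈ Finset.range N, (n : ℝ) ^ 2 = ((N : ℝ) - 1) * (N : ℝ) * (2 * (N : ℝ) - 1) / 6 := by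
  induction N with
  | zero => simp
  | succ n ih => rw [Finset.sum_range_succ, ih]; push_cast; ring

private lemma realside (M N : ℕ) (T : ℝ) (g : ℕ → ℝ) :
    (2 * Real.pi) ^ 2 * ∑ n ∈ Finset.range N, ∑ l ∈ Finset.range M,
        ((T * (n : ℝ) + g l) * (T * (n : ℝ) + g l))
    = (2 * Real.pi * T) ^ 2 * ((N : ℝ) - 1) * (M : ℝ) * (N : ℝ) * (2 * (N : ℝ) - 1) / 6
      + (2 * Real.pi) ^ 2 * (N : ℝ) * ∑ l ∈ Finset.range M, (g l) ^ 2
      + (2 * Real.pi) ^ 2 * T * ((N : ℝ) - 1) * (N : ℝ) * ∑ l ∈ Finset.range M, g l := by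
  have expand : ∀ n : ℕ, ∑ l ∈ Finset.range M, ((T * (n : ℝ) + g l) * (T * (n : ℝ) + g l))
      = (M : ℝ) * (T ^ 2 * (n : ℝ) ^ 2) + 2 * T * (n : ℝ) * (∑ l ∈ Finset.range M, g l)
        + ∑ l ∈ Finset.range M, (g l) ^ 2 := by
    intro n
    have h1 : ∀ l ∈ Finset.range M, (T * (n : ℝ) + g l) * (T * (n : ℝ) + g l)
        = T ^ 2 * (n : ℝ) ^ 2 + (g l * (2 * T * (n : ℝ)) + (g l) ^ 2) := by
      intro l _; ring
    rw [Finset.sum_congr rfl h1, Finset.sum_add_distrib, Finset.sum_add_distrib,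
      Finset.sum_const, ← Finset.sum_mul, Finset.card_range, nsmul_eq_mul]
    ring
  rw [Finset.sum_congr rfl fun n _ => expand n]
  rw [Finset.sum_add_distrib, Finset.sum_add_distrib, Finset.sum_const, Finset.card_range,
    nsmul_eq_mul]
  have h2 : ∑ n ∈ Finset.range N, (M : ℝ) * (T ^ 2 * (n : ℝ) ^ 2)
      = (M : ℝ) * T ^ 2 * ∑ n ∈ Finset.range N, (n : ℝ) ^ 2 := by
    rw [Finset.mul_sum]; exact Finset.sum_congr rfl fun n _ => by ring
  have h3 : ∑ n ∈ Finset.range N, 2 * T * (n : ℝ) * (∑ l ∈ Finset.range M, g l)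
      = 2 * T * (∑ l ∈ Finset.range M, g l) * ∑ n ∈ Finset.range N, (n : ℝ) := by
    rw [Finset.mul_sum]; exact Finset.sum_congr rfl fun n _ => by ring
  rw [h2, h3, sum_range_cast, sum_range_sq_cast]
  ring

private lemma sum4_comm {β : Type*} [AddCommMonoid β] (s t u v : Finset ℕ) (F : ℕ → ℕ → ℕ → ℕ → β) :
    ∑ k ∈ s, ∑ k' ∈ t, ∑ a ∈ u, ∑ b ∈ v, F k k' a b
    = ∑ a ∈ u, ∑ b ∈ v, ∑ k ∈ s, ∑ k' ∈ t, F k k' a b :=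
  calc ∑ k ∈ s, ∑ k' ∈ t, ∑ a ∈ u, ∑ b ∈ v, F k k' a b
      = ∑ k ∈ s, ∑ a ∈ u, ∑ k' ∈ t, ∑ b ∈ v, F k k' a b :=
        Finset.sum_congr rfl fun _ _ => Finset.sum_comm
    _ = ∑ a ∈ u, ∑ k ∈ s, ∑ k' ∈ t, ∑ b ∈ v, F k k' a b := Finset.sum_comm
    _ = ∑ a ∈ u, ∑ k ∈ s, ∑ b ∈ v, ∑ k' ∈ t, F k k' a b :=
        Finset.sum_congr rfl fun _ _ => Finset.sum_congr rfl fun _ _ => Finset.sum_comm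
    _ = ∑ a ∈ u, ∑ b ∈ v, ∑ k ∈ s, ∑ k' ∈ t, F k k' a b :=
        Finset.sum_congr rfl fun _ _ => Finset.sum_comm

/-- Appendix B, equation (25g):
`R^{(0,2)} = (2πT)² (N-1) M N (2N-1)/6 + (2π)² N Σ_l g(l)² + (2π)² T (N-1) N Σ_l g(l)`. -/
theorem stmt8 (M N : ℕ) (hM : 1 ≤ M) (hN : 1 ≤ N) (T : ℝ) (hT : 0 < T)
    (g : ℕ → ℝ) (x y : ℝ) :
    (((2 * Real.pi) ^ 2 : ℝ) : ℂ) / ((M : ℂ) ^ 2 * (N : ℂ) ^ 2) *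
      (∑ k ∈ Finset.range N, ∑ k' ∈ Finset.range N,
        ∑ n' ∈ Finset.range N, ∑ n'' ∈ Finset.range N,
        ∑ l ∈ Finset.range M, ∑ l' ∈ Finset.range M,
        ∑ m' ∈ Finset.range M, ∑ m'' ∈ Finset.range M,
          (((T * (n' : ℝ) + g l') * (T * (n'' : ℝ) + g l') : ℝ) : ℂ)
          * Complex.exp (2 * (Real.pi : ℂ) * Complex.I
              * ((k' : ℂ) - (k : ℂ) + (y : ℂ)) * ((n'' : ℂ) - (n' : ℂ)) / (N : ℂ))
          * Complex.exp (2 * (Real.pi : ℂ) * Complex.I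
              * ((l' : ℂ) - (l : ℂ) + (x : ℂ)) * ((m'' : ℂ) - (m' : ℂ)) / (M : ℂ)))
    = (((2 * Real.pi * T) ^ 2 * ((N : ℝ) - 1) * (M : ℝ) * (N : ℝ)
          * (2 * (N : ℝ) - 1) / 6
        + (2 * Real.pi) ^ 2 * (N : ℝ) * ∑ l ∈ Finset.range M, (g l) ^ 2
        + (2 * Real.pi) ^ 2 * T * ((N : ℝ) - 1) * (N : ℝ)
          * ∑ l ∈ Finset.range M, g l : ℝ) : ℂ) := by
  have hMp : 0 < M := hM
  have hNp : 0 < N := hN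
  have hMc : (M : ℂ) ≠ 0 := Nat.cast_ne_zero.2 hMp.ne'
  have hNc : (N : ℂ) ≠ 0 := Nat.cast_ne_zero.2 hNp.ne'
  -- Step 1: collapse the inner quadruple sum over l, l', m', m''
  have inner1 : ∀ k k' n' n'' : ℕ,
      ∑ l ∈ Finset.range M, ∑ l' ∈ Finset.range M,
        ∑ m' ∈ Finset.range M, ∑ m'' ∈ Finset.range M,
          (((T * (n' : ℝ) + g l') * (T * (n'' : ℝ) + g l') : ℝ) : ℂ)
          * Complex.exp (2 * (Real.pi : ℂ) * Complex.I
              * ((k' : ℂ) - (k : ℂ) + (y : ℂ)) * ((n'' : ℂ) - (n' : ℂ)) / (N : ℂ))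
          * Complex.exp (2 * (Real.pi : ℂ) * Complex.I
              * ((l' : ℂ) - (l : ℂ) + (x : ℂ)) * ((m'' : ℂ) - (m' : ℂ)) / (M : ℂ))
      = (M : ℂ) ^ 2 *
          ((∑ l' ∈ Finset.range M,
            (((T * (n' : ℝ) + g l') * (T * (n'' : ℝ) + g l') : ℝ) : ℂ))
          * Complex.exp (2 * (Real.pi : ℂ) * Complex.I
              * ((k' : ℂ) - (k : ℂ) + (y : ℂ)) * ((n'' : ℂ) - (n' : ℂ)) / (N : ℂ))) := by
    intro k k' n' n''
    rw [Finset.sum_comm]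
    calc ∑ l' ∈ Finset.range M, ∑ l ∈ Finset.range M,
          ∑ m' ∈ Finset.range M, ∑ m'' ∈ Finset.range M,
            (((T * (n' : ℝ) + g l') * (T * (n'' : ℝ) + g l') : ℝ) : ℂ)
            * Complex.exp (2 * (Real.pi : ℂ) * Complex.I
                * ((k' : ℂ) - (k : ℂ) + (y : ℂ)) * ((n'' : ℂ) - (n' : ℂ)) / (N : ℂ))
            * Complex.exp (2 * (Real.pi : ℂ) * Complex.I
                * ((l' : ℂ) - (l : ℂ) + (x : ℂ)) * ((m'' : ℂ) - (m' : ℂ)) / (M : ℂ))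
        = ∑ l' ∈ Finset.range M,
            ((((T * (n' : ℝ) + g l') * (T * (n'' : ℝ) + g l') : ℝ) : ℂ)
            * Complex.exp (2 * (Real.pi : ℂ) * Complex.I
                * ((k' : ℂ) - (k : ℂ) + (y : ℂ)) * ((n'' : ℂ) - (n' : ℂ)) / (N : ℂ)))
            * ∑ l ∈ Finset.range M, ∑ m' ∈ Finset.range M, ∑ m'' ∈ Finset.range M,
              Complex.exp (2 * (Real.pi : ℂ) * Complex.I
                * ((l' : ℂ) - (l : ℂ) + (x : ℂ)) * ((m'' : ℂ) - (m' : ℂ)) / (M : ℂ)) := by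
          refine Finset.sum_congr rfl fun l' _ => ?_
          simp only [Finset.mul_sum]
      _ = ∑ l' ∈ Finset.range M,
            ((((T * (n' : ℝ) + g l') * (T * (n'' : ℝ) + g l') : ℝ) : ℂ)
            * Complex.exp (2 * (Real.pi : ℂ) * Complex.I
                * ((k' : ℂ) - (k : ℂ) + (y : ℂ)) * ((n'' : ℂ) - (n' : ℂ)) / (N : ℂ)))
            * ((M : ℂ) ^ 2) := by
          refine Finset.sum_congr rfl fun l' _ => ?_
          rw [Mblock M hMp x l']
      _ = (M : ℂ) ^ 2 *
          ((∑ l' ∈ Finset.range M,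
            (((T * (n' : ℝ) + g l') * (T * (n'' : ℝ) + g l') : ℝ) : ℂ))
          * Complex.exp (2 * (Real.pi : ℂ) * Complex.I
              * ((k' : ℂ) - (k : ℂ) + (y : ℂ)) * ((n'' : ℂ) - (n' : ℂ)) / (N : ℂ))) := by
          rw [← Finset.sum_mul, ← Finset.sum_mul]
          ring
  -- apply inner1 inside the four outer sums and pull out M^2
  rw [Finset.sum_congr rfl fun k _ => Finset.sum_congr rfl fun k' _ =>
    Finset.sum_congr rfl fun n' _ => Finset.sum_congr rfl fun n'' _ => inner1 k k' n' n'']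
  simp only [← Finset.mul_sum]
  -- commute sums: bring n', n'' to the outside
  rw [sum4_comm (Finset.range N) (Finset.range N) (Finset.range N) (Finset.range N)
    (fun k k' n' n'' => (∑ l' ∈ Finset.range M,
        (((T * (n' : ℝ) + g l') * (T * (n'' : ℝ) + g l') : ℝ) : ℂ))
      * Complex.exp (2 * (Real.pi : ℂ) * Complex.I
          * ((k' : ℂ) - (k : ℂ) + (y : ℂ)) * ((n'' : ℂ) - (n' : ℂ)) / (N : ℂ)))]
  -- collapse the k, k' sums via Nblock
  have step2 : ∀ n' ∈ Finset.range N, ∀ n'' ∈ Finset.range N,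
      ∑ k ∈ Finset.range N, ∑ k' ∈ Finset.range N,
        (∑ l' ∈ Finset.range M,
          (((T * (n' : ℝ) + g l') * (T * (n'' : ℝ) + g l') : ℝ) : ℂ))
        * Complex.exp (2 * (Real.pi : ℂ) * Complex.I
            * ((k' : ℂ) - (k : ℂ) + (y : ℂ)) * ((n'' : ℂ) - (n' : ℂ)) / (N : ℂ))
      = if n' = n'' then (∑ l' ∈ Finset.range M,
          (((T * (n' : ℝ) + g l') * (T * (n'' : ℝ) + g l') : ℝ) : ℂ)) * (N : ℂ) ^ 2
        else 0 := by
    intro n' hn' n'' hn''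
    calc ∑ k ∈ Finset.range N, ∑ k' ∈ Finset.range N,
          (∑ l' ∈ Finset.range M,
            (((T * (n' : ℝ) + g l') * (T * (n'' : ℝ) + g l') : ℝ) : ℂ))
          * Complex.exp (2 * (Real.pi : ℂ) * Complex.I
              * ((k' : ℂ) - (k : ℂ) + (y : ℂ)) * ((n'' : ℂ) - (n' : ℂ)) / (N : ℂ))
        = (∑ l' ∈ Finset.range M,
            (((T * (n' : ℝ) + g l') * (T * (n'' : ℝ) + g l') : ℝ) : ℂ))
          * ∑ k ∈ Finset.range N, ∑ k' ∈ Finset.range N,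
              Complex.exp (2 * (Real.pi : ℂ) * Complex.I
                * ((k' : ℂ) - (k : ℂ) + (y : ℂ)) * ((n'' : ℂ) - (n' : ℂ)) / (N : ℂ)) := by
          simp only [Finset.mul_sum]
      _ = _ := by
          rw [Nblock N hNp y n' n'' (Finset.mem_range.1 hn') (Finset.mem_range.1 hn'')]
          split_ifs <;> simp
  rw [Finset.sum_congr rfl fun n' hn' => Finset.sum_congr rfl fun n'' hn'' =>
    step2 n' hn' n'' hn'']
  -- collapse the n'' sum
  have step3 : ∀ n' ∈ Finset.range N,
      ∑ n'' ∈ Finset.range N,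
        (if n' = n'' then (∑ l' ∈ Finset.range M,
          (((T * (n' : ℝ) + g l') * (T * (n'' : ℝ) + g l') : ℝ) : ℂ)) * (N : ℂ) ^ 2
        else 0)
      = (∑ l' ∈ Finset.range M,
          (((T * (n' : ℝ) + g l') * (T * (n' : ℝ) + g l') : ℝ) : ℂ)) * (N : ℂ) ^ 2 := by
    intro n' hn'
    rw [Finset.sum_ite_eq]
    simp [Finset.mem_range.1 hn']
  rw [Finset.sum_congr rfl step3]
  -- now purely a cast/arithmetic computation
  have cast1 : ∑ n' ∈ Finset.range N,
      (∑ l' ∈ Finset.range M,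
        (((T * (n' : ℝ) + g l') * (T * (n' : ℝ) + g l') : ℝ) : ℂ)) * (N : ℂ) ^ 2
      = (((∑ n' ∈ Finset.range N, ∑ l' ∈ Finset.range M,
          ((T * (n' : ℝ) + g l') * (T * (n' : ℝ) + g l'))) * (N : ℝ) ^ 2 : ℝ) : ℂ) := by
    push_cast
    rw [← Finset.sum_mul]
  rw [cast1]
  rw [show (((2 * Real.pi) ^ 2 : ℝ) : ℂ) / ((M : ℂ) ^ 2 * (N : ℂ) ^ 2) *
      ((M : ℂ) ^ 2 * (((∑ n' ∈ Finset.range N, ∑ l' ∈ Finset.range M,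
          ((T * (n' : ℝ) + g l') * (T * (n' : ℝ) + g l'))) * (N : ℝ) ^ 2 : ℝ) : ℂ))
      = (((2 * Real.pi) ^ 2 * ∑ n' ∈ Finset.range N, ∑ l' ∈ Finset.range M,
          ((T * (n' : ℝ) + g l') * (T * (n' : ℝ) + g l')) : ℝ) : ℂ) from by
    push_cast
    field_simp]
  rw [Complex.ofReal_inj]
  exact realside M N T g
end
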